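/- arXiv:1009.2004 — 8 statements merged into one kernel-verified Lean document; each statement's English description precedes it below -/
import Mathlib

section
/- Let $q,a,b$ be elements of a field with $q$ not a root of unity and all denominators nonzero, define $\mu_n = (aq;q)_n/(abq^2;q)_n$ where $(x;q)_n = \prod_{k=0}^{n-1}(1-xq^k)$. Then for any nonnegative integers $k_0,\dots,k_{n-1}$, $\det(\mu_{k_i+j})_{0\le i,j\le n-1} = \prod_{i=0}^{n-1}\frac{q^{(n-1)k_i}(aq;q)_{k_i}}{(abq^2;q)_{k_i+n-1}}\cdot\prod_{0\le i<j\le n-1}(q^{-k_i}-q^{-k_j})\cdot\prod_{1\le i\le j\le n-1}(abq^{j+1}-aq^i)$. -/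
/-- The q-Pochhammer symbol `(x; q)_m = ∏_{l=0}^{m-1} (1 - x q^l)`. -/
def qPoch {F : Type*} [Field F] (q x : F) (m : ℕ) : F :=
  ∏ l ∈ Finset.range m, (1 - x * q ^ l)

open Polynomial Finset in
lemma newton_exists {F : Type*} [Field F] :
    ∀ (d : ℕ) (b : ℕ → F) (f : F[X]), f.natDegree ≤ d →
    ∃ c : ℕ → F, c 0 = f.eval (b 0) ∧
      f = ∑ r ∈ Finset.range (d+1), C (c r) * ∏ u ∈ Finset.range r, (X - C (b u)) := by
  intro d
  induction d with
  | zero =>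
    intro b f hf
    refine ⟨fun _ => f.eval (b 0), rfl, ?_⟩
    rw [Polynomial.eq_C_of_natDegree_le_zero hf]
    simp
  | succ d ih =>
    intro b f hf
    set e := f.eval (b 0) with he
    set g := f /ₘ (X - C (b 0)) with hg
    have hm : (X - C (b 0)).Monic := monic_X_sub_C _
    have hkey : f = C e + (X - C (b 0)) * g := by
      conv_lhs => rw [← Polynomial.modByMonic_add_div f (X - C (b 0))]
      rw [Polynomial.modByMonic_X_sub_C_eq_C_eval]
    have hgd : g.natDegree ≤ d := by
      rw [hg, Polynomial.natDegree_divByMonic f hm, Polynomial.natDegree_X_sub_C]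
      omega
    obtain ⟨c', hc'0, hc'⟩ := ih (fun u => b (u+1)) g hgd
    refine ⟨fun r => match r with | 0 => e | r+1 => c' r, rfl, ?_⟩
    rw [Finset.sum_range_succ']
    simp only [Finset.prod_range_zero, mul_one]
    rw [hkey, hc', Finset.mul_sum, add_comm]
    congr 1
    refine Finset.sum_congr rfl fun r _ => ?_
    rw [Finset.prod_range_succ']
    ring

open Polynomial Finset in
lemma key_det {F : Type*} [Field F] (n : ℕ) (Xv A B : ℕ → F) :
    Matrix.det (Matrix.of fun i j : Fin n =>
      (∏ t ∈ Finset.range (j:ℕ), (Xv i - B t)) * ∏ t ∈ Finset.Ico (j:ℕ) (n-1), (Xv i - A t)) =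
    (∏ i : Fin n, ∏ j ∈ Finset.Ioi i, (Xv (j:ℕ) - Xv (i:ℕ))) *
    ∏ j ∈ Finset.range n, ∏ t ∈ Finset.Ico j (n-1), (B j - A t) := by
  classical
  set p : ℕ → F[X] := fun m => ∏ t ∈ Finset.range m, (X - C (B t)) with hp
  set f : ℕ → F[X] := fun j => ∏ t ∈ Finset.Ico j (n-1), (X - C (A t)) with hf
  have hpmonic : ∀ m, (p m).Monic := fun m =>
    monic_prod_of_monic _ _ fun t _ => monic_X_sub_C _
  have hpdeg : ∀ m, (p m).natDegree = m := by
    intro m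
    rw [hp]
    rw [Polynomial.natDegree_prod_of_monic _ _ fun t _ => monic_X_sub_C _]
    simp [Polynomial.natDegree_X_sub_C]
  have hfdeg : ∀ j : Fin n, (f j).natDegree ≤ n - 1 - (j:ℕ) := by
    intro j
    rw [hf]
    rw [Polynomial.natDegree_prod_of_monic _ _ fun t _ => monic_X_sub_C _]
    simp [Polynomial.natDegree_X_sub_C, Nat.card_Ico]
  have hc := fun j : Fin n =>
    (newton_exists (n - 1 - (j:ℕ)) (fun u => B ((j:ℕ) + u)) (f j) (hfdeg j)).choose_spec
  set c : Fin n → ℕ → F := fun j =>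
    (newton_exists (n - 1 - (j:ℕ)) (fun u => B ((j:ℕ) + u)) (f j) (hfdeg j)).choose with hcdef
  set T : Matrix (Fin n) (Fin n) F :=
    Matrix.of (fun m j => if (j:ℕ) ≤ (m:ℕ) then c j ((m:ℕ) - (j:ℕ)) else 0) with hT
  have hjle : ∀ j : Fin n, (j:ℕ) ≤ n - 1 := fun j => by have := j.2; omega
  have hVT : (Matrix.of fun i j : Fin n =>
      (∏ t ∈ Finset.range (j:ℕ), (Xv i - B t)) * ∏ t ∈ Finset.Ico (j:ℕ) (n-1), (Xv i - A t)) =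
      (Matrix.of fun i m : Fin n => (p (m:ℕ)).eval (Xv i)) * T := by
    ext i j
    rw [Matrix.mul_apply]
    simp only [Matrix.of_apply, hT]
    rw [Fin.sum_univ_eq_sum_range
      (fun m => (p m).eval (Xv (i:ℕ)) * (if (j:ℕ) ≤ m then c j (m - (j:ℕ)) else 0)) n]
    simp only [mul_ite, mul_zero]
    rw [← Finset.sum_filter]
    have hfil : (Finset.range n).filter (fun m => (j:ℕ) ≤ m) = Finset.Ico (j:ℕ) n := by
      ext m; simp [Finset.mem_filter, Finset.mem_range, Finset.mem_Ico, and_comm]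
    rw [hfil, Finset.sum_Ico_eq_sum_range]
    simp only [Nat.add_sub_cancel_left, Nat.add_sub_cancel]
    have hsum : p (j:ℕ) * f (j:ℕ) = ∑ r ∈ Finset.range (n - (j:ℕ)), C (c j r) * p ((j:ℕ) + r) := by
      have h2 := (hc j).2
      have hnr : n - 1 - (j:ℕ) + 1 = n - (j:ℕ) := by have := j.2; omega
      conv_lhs => rw [h2]
      rw [Finset.mul_sum, ← hnr]
      refine Finset.sum_congr rfl fun r _ => ?_
      have : p ((j:ℕ) + r) = p (j:ℕ) * ∏ u ∈ Finset.range r, (X - C (B ((j:ℕ) + u))) := by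
        rw [hp]; exact Finset.prod_range_add _ _ _
      rw [this]; ring
    have := congrArg (Polynomial.eval (Xv (i:ℕ))) hsum
    rw [Polynomial.eval_mul, Polynomial.eval_finset_sum] at this
    simp only [Polynomial.eval_mul, Polynomial.eval_C] at this
    have hL : (∏ t ∈ Finset.range (j:ℕ), (Xv (i:ℕ) - B t)) = (p (j:ℕ)).eval (Xv (i:ℕ)) := by
      rw [hp]; simp [Polynomial.eval_prod]
    have hR : (∏ t ∈ Finset.Ico (j:ℕ) (n-1), (Xv (i:ℕ) - A t)) = (f (j:ℕ)).eval (Xv (i:ℕ)) := by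
      rw [hf]; simp [Polynomial.eval_prod]
    rw [hL, hR, this]
    refine Finset.sum_congr rfl fun r hr => ?_
    rw [Finset.mem_range] at hr
    ring
  rw [hVT, Matrix.det_mul]
  have hV := Matrix.det_eval_matrixOfPolynomials_eq_det_vandermonde
    (fun i : Fin n => Xv (i:ℕ)) (fun m : Fin n => p (m:ℕ))
    (fun m => hpdeg (m:ℕ)) (fun m => hpmonic (m:ℕ))
  rw [← hV, Matrix.det_vandermonde]
  have hTlow : T.BlockTriangular OrderDual.toDual := by
    intro m j hmj
    have : (m:ℕ) < (j:ℕ) := hmj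
    simp only [hT, Matrix.of_apply]
    rw [if_neg (by omega)]
  rw [Matrix.det_of_lowerTriangular T hTlow]
  congr 1
  rw [← Fin.prod_univ_eq_prod_range (fun j => ∏ t ∈ Finset.Ico j (n-1), (B j - A t)) n]
  refine Finset.prod_congr rfl fun j _ => ?_
  have hd : T j j = c j 0 := by simp [hT]
  rw [hd]
  refine ((hc j).1).trans ?_
  rw [hf]
  simp [Polynomial.eval_prod]

lemma prod_flip_neg {F : Type*} [Field F] {α : Type*} (s : Finset α) (f g : α → F) :
    ∏ j ∈ s, (f j - g j) = (-1 : F)^s.card * ∏ j ∈ s, (g j - f j) := by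
  rw [← Finset.prod_const, ← Finset.prod_mul_distrib]
  exact Finset.prod_congr rfl fun j _ => by ring

lemma flip_signs {F : Type*} [Field F] (n : ℕ) (Xv A B : ℕ → F) :
    (∏ i : Fin n, ∏ j ∈ Finset.Ioi i, (Xv (j:ℕ) - Xv (i:ℕ))) *
      ∏ j ∈ Finset.range n, ∏ t ∈ Finset.Ico j (n-1), (B j - A t) =
    (∏ i : Fin n, ∏ j ∈ Finset.Ioi i, (Xv (i:ℕ) - Xv (j:ℕ))) *
      ∏ t ∈ Finset.range (n-1), ∏ s ∈ Finset.range (t+1), (A t - B s) := by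
  have h1 : (∏ i : Fin n, ∏ j ∈ Finset.Ioi i, (Xv (j:ℕ) - Xv (i:ℕ))) =
      (-1:F) ^ (∑ i : Fin n, (Finset.Ioi i).card) *
        ∏ i : Fin n, ∏ j ∈ Finset.Ioi i, (Xv (i:ℕ) - Xv (j:ℕ)) := by
    rw [← Finset.prod_pow_eq_pow_sum, ← Finset.prod_mul_distrib]
    exact Finset.prod_congr rfl fun i _ => prod_flip_neg _ _ _
  have h2 : (∏ j ∈ Finset.range n, ∏ t ∈ Finset.Ico j (n-1), (B j - A t)) =
      (-1:F) ^ (∑ j ∈ Finset.range n, (Finset.Ico j (n-1)).card) *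
        ∏ j ∈ Finset.range n, ∏ t ∈ Finset.Ico j (n-1), (A t - B j) := by
    rw [← Finset.prod_pow_eq_pow_sum, ← Finset.prod_mul_distrib]
    exact Finset.prod_congr rfl fun j _ => prod_flip_neg _ _ _
  have hcard : (∑ i : Fin n, (Finset.Ioi i).card) =
      ∑ j ∈ Finset.range n, (Finset.Ico j (n-1)).card := by
    rw [← Fin.sum_univ_eq_sum_range (fun j => (Finset.Ico j (n-1)).card) n]
    refine Finset.sum_congr rfl fun i _ => ?_
    rw [Fin.card_Ioi, Nat.card_Ico]
  have hswap : (∏ j ∈ Finset.range n, ∏ t ∈ Finset.Ico j (n-1), (A t - B j)) =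
      ∏ t ∈ Finset.range (n-1), ∏ s ∈ Finset.range (t+1), (A t - B s) := by
    refine Finset.prod_comm' fun x y => ?_
    simp only [Finset.mem_range, Finset.mem_Ico]
    omega
  rw [h1, h2, hcard, hswap, mul_mul_mul_comm, ← pow_add,
    Even.neg_one_pow ⟨_, rfl⟩, one_mul]

lemma qPoch_add {F : Type*} [Field F] (q x : F) (m r : ℕ) :
    qPoch q x (m + r) = qPoch q x m * ∏ t ∈ Finset.range r, (1 - x * q ^ (m + t)) := by
  unfold qPoch
  rw [Finset.prod_range_add]

lemma vand_match {F : Type*} [Field F] (n : ℕ) (Xv : ℕ → F) :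
    (∏ i : Fin n, ∏ j ∈ Finset.Ioi i, (Xv (i:ℕ) - Xv (j:ℕ))) =
    ∏ i ∈ Finset.range n, ∏ j ∈ Finset.Ioo i n, (Xv i - Xv j) := by
  rw [← Fin.prod_univ_eq_prod_range (fun i => ∏ j ∈ Finset.Ioo i n, (Xv i - Xv j)) n]
  refine Finset.prod_congr rfl fun i _ => ?_
  have h : Finset.Ioo (i:ℕ) n = (Finset.Ioi i).map Fin.valEmbedding := by
    rw [Fin.map_valEmbedding_Ioi]
  rw [h, Finset.prod_map]
  rfl

lemma tri_match {F : Type*} [Field F] (n : ℕ) (a b q : F) :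
    (∏ t ∈ Finset.range (n-1), ∏ s ∈ Finset.range (t+1),
      (a * b * q ^ (2 + t) - a * q ^ (1 + s))) =
    ∏ j ∈ Finset.Icc 1 (n - 1), ∏ i ∈ Finset.Icc 1 j, (a * b * q ^ (j + 1) - a * q ^ i) := by
  have h1 : Finset.Icc 1 (n-1) = Finset.Ico 1 n ∨ n = 0 := by
    rcases Nat.eq_zero_or_pos n with h | h
    · right; exact h
    · left; ext m; simp [Finset.mem_Icc, Finset.mem_Ico]; omega
  rcases h1 with h1 | h1
  · rw [h1, Finset.prod_Ico_eq_prod_range]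
    refine Finset.prod_congr rfl fun t _ => ?_
    have h2 : Finset.Icc 1 (1 + t) = Finset.Ico 1 (t + 2) := by
      ext m; simp [Finset.mem_Icc, Finset.mem_Ico]; omega
    rw [h2, Finset.prod_Ico_eq_prod_range]
    have h3 : t + 2 - 1 = t + 1 := by omega
    rw [h3]
    refine Finset.prod_congr rfl fun s _ => ?_
    have h4 : (1:ℕ) + t + 1 = 2 + t := by omega
    rw [h4]
  · subst h1; simp

lemma entry_eq {F : Type*} [Field F] (q a b : F) (hq : q ≠ 0)
    (n : ℕ) (hn : 1 ≤ n) (K : ℕ) (jj : ℕ) (hjn : jj ≤ n - 1)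
    (hden' : qPoch q (a * b * q ^ 2) (K + (n - 1)) ≠ 0) :
    qPoch q (a * q) (K + jj) / qPoch q (a * b * q ^ 2) (K + jj) =
    (q ^ ((n - 1) * K) * qPoch q (a * q) K / qPoch q (a * b * q ^ 2) (K + (n - 1))) *
      ((∏ t ∈ Finset.range jj, (q ^ (-(K:ℤ)) - a * q ^ (1 + t))) *
       ∏ t ∈ Finset.Ico jj (n - 1), (q ^ (-(K:ℤ)) - a * b * q ^ (2 + t))) := by
  have hqK : q ^ K * q ^ (-(K:ℤ)) = 1 := by
    rw [← zpow_natCast q K, ← zpow_add₀ hq]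
    simp
  have hB : ∀ t : ℕ, 1 - a * q * q ^ (K + t) = q ^ K * (q ^ (-(K:ℤ)) - a * q ^ (1 + t)) := by
    intro t
    rw [mul_sub, hqK]
    ring
  have hA : ∀ t : ℕ, 1 - a * b * q ^ 2 * q ^ (K + jj + t) =
      q ^ K * (q ^ (-(K:ℤ)) - a * b * q ^ (2 + (jj + t))) := by
    intro t
    rw [mul_sub, hqK]
    ring
  set Z : F := ∏ t ∈ Finset.range (n - 1 - jj), (1 - a * b * q ^ 2 * q ^ (K + jj + t)) with hZdef
  have hsplit : K + (n - 1) = (K + jj) + (n - 1 - jj) := by omega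
  have hD : qPoch q (a * b * q ^ 2) (K + (n - 1)) = qPoch q (a * b * q ^ 2) (K + jj) * Z := by
    rw [hsplit, qPoch_add, hZdef]
  have hZ : Z ≠ 0 := fun h => hden' (by rw [hD, h, mul_zero])
  have hPB : (∏ t ∈ Finset.range jj, (1 - a * q * q ^ (K + t))) =
      (q ^ K) ^ jj * ∏ t ∈ Finset.range jj, (q ^ (-(K:ℤ)) - a * q ^ (1 + t)) := by
    calc (∏ t ∈ Finset.range jj, (1 - a * q * q ^ (K + t)))
        = ∏ t ∈ Finset.range jj, (q ^ K * (q ^ (-(K:ℤ)) - a * q ^ (1 + t))) :=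
          Finset.prod_congr rfl fun t _ => hB t
      _ = _ := by rw [Finset.prod_mul_distrib, Finset.prod_const, Finset.card_range]
  have hPA : Z = (q ^ K) ^ (n - 1 - jj) *
      ∏ t ∈ Finset.Ico jj (n - 1), (q ^ (-(K:ℤ)) - a * b * q ^ (2 + t)) := by
    rw [Finset.prod_Ico_eq_prod_range, hZdef]
    calc (∏ t ∈ Finset.range (n - 1 - jj), (1 - a * b * q ^ 2 * q ^ (K + jj + t)))
        = ∏ t ∈ Finset.range (n - 1 - jj),
            (q ^ K * (q ^ (-(K:ℤ)) - a * b * q ^ (2 + (jj + t)))) :=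
          Finset.prod_congr rfl fun t _ => hA t
      _ = _ := by rw [Finset.prod_mul_distrib, Finset.prod_const, Finset.card_range]
  rw [← mul_div_mul_right (qPoch q (a * q) (K + jj)) (qPoch q (a * b * q ^ 2) (K + jj)) hZ,
    ← hD]
  rw [show K + jj = K + jj from rfl, qPoch_add q (a * q) K jj, hPB]
  nth_rewrite 1 [hPA]
  rw [div_mul_eq_mul_div]
  congr 1
  have hpow : (q ^ K) ^ jj * (q ^ K) ^ (n - 1 - jj) = q ^ ((n - 1) * K) := by
    rw [← pow_add, show jj + (n - 1 - jj) = n - 1 from by omega, ← pow_mul, Nat.mul_comm]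
  rw [← hpow]
  ring

theorem stmt_1 {F : Type*} [Field F] (q a b : F) (hq : q ≠ 0)
    (n : ℕ) (hn : 1 ≤ n) (k : ℕ → ℕ)
    (hden : ∀ i ∈ Finset.range n, qPoch q (a * b * q ^ 2) (k i + n - 1) ≠ 0) :
    Matrix.det (Matrix.of fun i j : Fin n =>
      qPoch q (a * q) (k i + j) / qPoch q (a * b * q ^ 2) (k i + j)) =
    (∏ i ∈ Finset.range n,
        q ^ ((n - 1) * k i) * qPoch q (a * q) (k i) /
          qPoch q (a * b * q ^ 2) (k i + n - 1)) *
    (∏ i ∈ Finset.range n, ∏ j ∈ Finset.Ioo i n,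
        (q ^ (-(k i : ℤ)) - q ^ (-(k j : ℤ)))) *
    ∏ j ∈ Finset.Icc 1 (n - 1), ∏ i ∈ Finset.Icc 1 j,
        (a * b * q ^ (j + 1) - a * q ^ i) := by
  have hMeq : (Matrix.of fun i j : Fin n =>
      qPoch q (a * q) (k i + j) / qPoch q (a * b * q ^ 2) (k i + j)) =
      Matrix.of (fun i j : Fin n =>
        (fun i : Fin n => q ^ ((n - 1) * k i) * qPoch q (a * q) (k i) /
            qPoch q (a * b * q ^ 2) (k i + n - 1)) i *
        (Matrix.of fun i j : Fin n =>
          (∏ t ∈ Finset.range (j:ℕ), (q ^ (-(k (i:ℕ) : ℤ)) - a * q ^ (1 + t))) *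
          ∏ t ∈ Finset.Ico (j:ℕ) (n - 1), (q ^ (-(k (i:ℕ) : ℤ)) - a * b * q ^ (2 + t))) i j) := by
    ext i j
    simp only [Matrix.of_apply]
    have hjn : (j:ℕ) ≤ n - 1 := by have := j.2; omega
    have hden' : qPoch q (a * b * q ^ 2) (k (i:ℕ) + (n - 1)) ≠ 0 := by
      have h := hden (i:ℕ) (Finset.mem_range.mpr i.2)
      rwa [show k (i:ℕ) + n - 1 = k (i:ℕ) + (n - 1) from by omega] at h
    rw [show k (i:ℕ) + n - 1 = k (i:ℕ) + (n - 1) from by omega]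
    exact entry_eq q a b hq n hn (k (i:ℕ)) (j:ℕ) hjn hden'
  rw [hMeq, Matrix.det_mul_column, key_det n (fun m => q ^ (-(k m : ℤ)))
      (fun t => a * b * q ^ (2 + t)) (fun t => a * q ^ (1 + t)),
    flip_signs n (fun m => q ^ (-(k m : ℤ))) (fun t => a * b * q ^ (2 + t))
      (fun t => a * q ^ (1 + t)),
    vand_match n (fun m => q ^ (-(k m : ℤ))), tri_match n a b q]
  rw [Fin.prod_univ_eq_prod_range (fun m => q ^ ((n - 1) * k m) * qPoch q (a * q) (k m) /
      qPoch q (a * b * q ^ 2) (k m + n - 1)) n]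
  ring
end

section
/- For all $z$ in a suitable domain and parameters $a,b$, the quadratic transformation $(1-z)^a\, {}_2F_1(a,b;2b;2z) = {}_2F_1\left(\tfrac{a}{2},\tfrac{a+1}{2};b+\tfrac12;\tfrac{z^2}{(1-z)^2}\right)$ holds as an identity of formal power series (or for $|z|$ sufficiently small), provided $2b$ and $b+\tfrac12$ are not nonpositive integers. -/
/-- The rising factorial `(a)ₖ = a (a+1) ⋯ (a+k-1)`. -/
noncomputable def risingFactorial (a : ℝ) (k : ℕ) : ℝ :=
  ∏ l ∈ Finset.range k, (a + l)

/-- The Gauss hypergeometric series `₂F₁(a, b; c; x)`. -/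
noncomputable def hyp2F1 (a b c x : ℝ) : ℝ :=
  ∑' k : ℕ,
    risingFactorial a k * risingFactorial b k /
      (risingFactorial c k * k.factorial) * x ^ k

open Finset Filter Topology

section RF

lemma rf_zero (a : ℝ) : risingFactorial a 0 = 1 := by simp [risingFactorial]

lemma rf_succ (a : ℝ) (k : ℕ) : risingFactorial a (k+1) = risingFactorial a k * (a + k) :=
  Finset.prod_range_succ _ _

lemma rf_succ' (a : ℝ) (k : ℕ) : risingFactorial a (k+1) = a * risingFactorial (a+1) k := by
  rw [risingFactorial, Finset.prod_range_succ']
  push_cast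
  rw [add_zero, mul_comm]
  congr 1
  exact Finset.prod_congr rfl fun l _ => by push_cast; ring

lemma rf_add (a : ℝ) (m n : ℕ) :
    risingFactorial a (m+n) = risingFactorial a m * risingFactorial (a+m) n := by
  rw [risingFactorial, Finset.prod_range_add]
  congr 1
  exact Finset.prod_congr rfl fun l _ => by push_cast; ring

lemma rf_nonneg {a : ℝ} (h : 0 ≤ a) (k : ℕ) : 0 ≤ risingFactorial a k :=
  Finset.prod_nonneg fun l _ => add_nonneg h (Nat.cast_nonneg l)

lemma rf_pos {a : ℝ} (h : 0 < a) (k : ℕ) : 0 < risingFactorial a k :=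
  Finset.prod_pos fun l _ => by positivity

lemma rf_mono {a c : ℝ} (h0 : 0 ≤ a) (h : a ≤ c) (k : ℕ) :
    risingFactorial a k ≤ risingFactorial c k :=
  Finset.prod_le_prod (fun l _ => add_nonneg h0 (Nat.cast_nonneg l)) (fun l _ => by linarith)

lemma abs_rf_le (a : ℝ) (k : ℕ) : |risingFactorial a k| ≤ risingFactorial |a| k := by
  rw [risingFactorial, Finset.abs_prod]
  exact Finset.prod_le_prod (fun l _ => abs_nonneg _)
    (fun l _ => (abs_add_le a l).trans (by simp))

lemma rf_ne_zero {a : ℝ} (h : ∀ m : ℕ, a + (m:ℝ) ≠ 0) (k : ℕ) : risingFactorial a k ≠ 0 :=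
  Finset.prod_ne_zero_iff.2 fun l _ => h l

lemma rf_one (k : ℕ) : risingFactorial 1 k = k.factorial := by
  induction k with
  | zero => simp [risingFactorial]
  | succ n ih => rw [rf_succ, ih, Nat.factorial_succ]; push_cast; ring

lemma rf_cast_le (M j : ℕ) : risingFactorial (M:ℝ) j ≤ ((j:ℝ)+1)^M * j.factorial := by
  induction j with
  | zero => simp [rf_zero]
  | succ n ih =>
    rw [rf_succ]
    have hn1 : (0:ℝ) < (n:ℝ)+1 := by positivity
    have h1 : risingFactorial (M:ℝ) n * ((M:ℝ) + n) ≤ (((n:ℝ)+1)^M * n.factorial) * ((M:ℝ)+n) :=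
      mul_le_mul_of_nonneg_right ih (by positivity)
    refine h1.trans ?_
    have hber : 1 + (M:ℝ) * (1/((n:ℝ)+1)) ≤ (1 + 1/((n:ℝ)+1))^M :=
      one_add_mul_le_pow (by
        have : (0:ℝ) ≤ 1/((n:ℝ)+1) := by positivity
        linarith) M
    have h2 : ((n:ℝ)+1+1) = ((n:ℝ)+1) * (1 + 1/((n:ℝ)+1)) := by field_simp
    have key : ((n:ℝ)+1)^M * ((M:ℝ)+n) ≤ ((n:ℝ)+1+1)^M * ((n:ℝ)+1) := by
      rw [h2, mul_pow]
      have h3 : (1 + (M:ℝ) * (1/((n:ℝ)+1))) * ((n:ℝ)+1) = (n:ℝ)+1+M := by field_simp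
      calc ((n:ℝ)+1)^M * ((M:ℝ)+n) ≤ ((n:ℝ)+1)^M * ((1 + (M:ℝ) * (1/((n:ℝ)+1))) * ((n:ℝ)+1)) := by
            rw [h3]; apply mul_le_mul_of_nonneg_left (by linarith) (by positivity)
        _ ≤ ((n:ℝ)+1)^M * ((1 + 1/((n:ℝ)+1))^M * ((n:ℝ)+1)) := by
            apply mul_le_mul_of_nonneg_left ?_ (by positivity)
            exact mul_le_mul_of_nonneg_right hber (by positivity)
        _ = ((n:ℝ)+1)^M * (1 + 1/((n:ℝ)+1))^M * ((n:ℝ)+1) := by ring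
    calc (((n:ℝ)+1)^M * n.factorial) * ((M:ℝ)+n)
        = (((n:ℝ)+1)^M * ((M:ℝ)+n)) * n.factorial := by ring
      _ ≤ (((n:ℝ)+1+1)^M * ((n:ℝ)+1)) * n.factorial := by
          apply mul_le_mul_of_nonneg_right key (by positivity)
      _ = ((n:ℝ)+1+1)^M * (((n:ℝ)+1) * n.factorial) := by ring
      _ = ((n:ℝ)+1+1)^M * (n+1).factorial := by rw [Nat.factorial_succ]; push_cast; ring
      _ = ((n+1:ℕ):ℝ)^M * (n+1).factorial + ((n:ℝ)+1+1)^M * (n+1).factorial - ((n+1:ℕ):ℝ)^M * (n+1).factorial := by ring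
      _ = (((n+1:ℕ):ℝ)+1)^M * (n+1).factorial := by push_cast; ring

lemma abs_rf_le' (r : ℝ) (j : ℕ) :
    |risingFactorial r j| ≤ ((j:ℝ)+1)^(⌈|r|⌉₊) * j.factorial :=
  ((abs_rf_le r j).trans (rf_mono (abs_nonneg r) (Nat.le_ceil _) j)).trans
    (rf_cast_le _ j)

end RF

section Summability

lemma summable_pow_succ_geo (M : ℕ) {q : ℝ} (h0 : 0 ≤ q) (h1 : q < 1) :
    Summable (fun j : ℕ => ((j:ℝ)+1)^M * q^j) := by
  rcases eq_or_lt_of_le h0 with h | h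
  · apply summable_of_ne_finset_zero (s := {0})
    intro j hj
    have hj' : j ≠ 0 := by simpa using hj
    simp [← h, zero_pow hj']
  · have hs : Summable (fun n : ℕ => (n:ℝ)^M * q^n) :=
      summable_pow_mul_geometric_of_norm_lt_one M (by rwa [Real.norm_eq_abs, abs_of_nonneg h0])
    have h2 : Summable (fun j : ℕ => ((j+1:ℕ):ℝ)^M * q^(j+1)) :=
      hs.comp_injective (add_left_injective 1)
    have h3 := h2.mul_left q⁻¹
    apply h3.congr
    intro j
    push_cast
    field_simp
    ring

lemma summable_pow_add_geo (M c : ℕ) {q : ℝ} (h0 : 0 ≤ q) (h1 : q < 1) :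
    Summable (fun j : ℕ => ((j:ℝ)+c)^M * q^j) := by
  have hs := (summable_pow_succ_geo M h0 h1).mul_left (((c:ℝ)+1)^M)
  refine Summable.of_nonneg_of_le (fun j => by positivity) (fun j => ?_) hs
  have hle : ((j:ℝ)+c) ≤ ((j:ℝ)+1)*((c:ℝ)+1) := by nlinarith [Nat.cast_nonneg (α := ℝ) j, Nat.cast_nonneg (α := ℝ) c]
  calc ((j:ℝ)+c)^M * q^j ≤ (((j:ℝ)+1)*((c:ℝ)+1))^M * q^j := by
        apply mul_le_mul_of_nonneg_right _ (by positivity)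
        exact pow_le_pow_left₀ (by positivity) hle M
    _ = ((c:ℝ)+1)^M * (((j:ℝ)+1)^M * q^j) := by rw [mul_pow]; ring

lemma summable_hyp (α β γ : ℝ) (hγ : ∀ m : ℕ, γ + (m:ℝ) ≠ 0) {x : ℝ} (hx : |x| < 1) :
    Summable (fun k : ℕ =>
      risingFactorial α k * risingFactorial β k /
        (risingFactorial γ k * k.factorial) * x ^ k) := by
  by_cases hx0 : x = 0
  · apply summable_of_ne_finset_zero (s := {0})
    intro k hk
    have hk' : k ≠ 0 := by simpa using hk
    simp [hx0, zero_pow hk']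
  set t := fun k : ℕ => risingFactorial α k * risingFactorial β k /
      (risingFactorial γ k * k.factorial) * x ^ k with ht
  have hrec : ∀ k : ℕ, t (k+1) = t k * ((α+k)*(β+k)/((γ+k)*((k:ℝ)+1)) * x) := by
    intro k
    have h1 : risingFactorial γ k ≠ 0 := rf_ne_zero hγ k
    have h2 : (γ + (k:ℝ)) ≠ 0 := hγ k
    have h3 : ((k.factorial : ℝ)) ≠ 0 := Nat.cast_ne_zero.2 k.factorial_ne_zero
    have h4 : ((k:ℝ)+1) ≠ 0 := by positivity
    simp only [ht, rf_succ, Nat.factorial_succ, pow_succ]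
    push_cast
    field_simp
  apply summable_of_ratio_norm_eventually_le (r := (1 + |x|)/2)
    (by have := abs_nonneg x; linarith)
  have e1 : ∀ k : ℕ, (α+(k:ℝ))*(β+k)/((γ+k)*((k:ℝ)+1))
      = (1 + (α-γ)/(γ+k)) * (1 + (β-1)/((k:ℝ)+1)) := by
    intro k
    have h2 : (γ + (k:ℝ)) ≠ 0 := hγ k
    have h4 : ((k:ℝ)+1) ≠ 0 := by positivity
    field_simp
    ring
  have l1 : Tendsto (fun k : ℕ => (α-γ)/(γ+(k:ℝ))) atTop (𝓝 0) := by
    have : Tendsto (fun k : ℕ => γ+(k:ℝ)) atTop atTop :=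
      tendsto_atTop_add_const_left _ γ tendsto_natCast_atTop_atTop
    simpa [div_eq_mul_inv] using this.inv_tendsto_atTop.const_mul (α-γ)
  have l2 : Tendsto (fun k : ℕ => (β-1)/((k:ℝ)+1)) atTop (𝓝 0) := by
    have : Tendsto (fun k : ℕ => (k:ℝ)+1) atTop atTop :=
      tendsto_atTop_add_const_right _ 1 tendsto_natCast_atTop_atTop
    simpa [div_eq_mul_inv] using this.inv_tendsto_atTop.const_mul (β-1)
  have hq : Tendsto (fun k : ℕ => |(α+(k:ℝ))*(β+k)/((γ+k)*((k:ℝ)+1))| * |x|)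
      atTop (𝓝 (|1| * |x|)) := by
    apply Tendsto.mul_const
    apply Filter.Tendsto.abs
    have := (tendsto_const_nhds (x := (1:ℝ)) (f := atTop (α := ℕ))).add l1 |>.mul
      ((tendsto_const_nhds (x := (1:ℝ)) (f := atTop (α := ℕ))).add l2)
    simp only [add_zero, one_mul] at this
    exact Tendsto.congr (fun k => (e1 k).symm) this
  rw [abs_one, one_mul] at hq
  have hlt := hq.eventually_lt_const (by linarith : |x| < (1+|x|)/2)
  filter_upwards [hlt] with k hk
  rw [hrec k, norm_mul]
  have hq2 : ‖(α+(k:ℝ))*(β+(k:ℝ))/((γ+(k:ℝ))*((k:ℝ)+1)) * x‖ ≤ (1+|x|)/2 := by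
    rw [Real.norm_eq_abs, abs_mul]; exact hk.le
  calc ‖t k‖ * ‖(α+(k:ℝ))*(β+(k:ℝ))/((γ+(k:ℝ))*((k:ℝ)+1)) * x‖
      ≤ ‖t k‖ * ((1+|x|)/2) := mul_le_mul_of_nonneg_left hq2 (norm_nonneg _)
    _ = (1+|x|)/2 * ‖t k‖ := mul_comm _ _

lemma summable_binom (r : ℝ) {x : ℝ} (hx : |x| < 1) :
    Summable (fun j : ℕ => risingFactorial r j / j.factorial * x ^ j) := by
  have h := summable_hyp r 1 1 (fun m => by positivity) hx
  apply h.congr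
  intro n
  have hc : ((n.factorial : ℝ)) ≠ 0 := Nat.cast_ne_zero.2 n.factorial_ne_zero
  rw [rf_one]
  field_simp

end Summability

section Binom

noncomputable def binomF (r x : ℝ) : ℝ := ∑' j : ℕ, risingFactorial r j / j.factorial * x ^ j

lemma binomF_zero (r : ℝ) : binomF r 0 = 1 := by
  rw [binomF, tsum_eq_single 0 (fun j hj => by simp [zero_pow hj])]
  simp [rf_zero]

lemma binomF_funeq (r : ℝ) {x : ℝ} (hx : |x| < 1) :
    binomF r x = (1 - x) * binomF (r+1) x := by
  have hs1 : HasSum (fun n : ℕ => risingFactorial (r+1) n / n.factorial * x ^ n)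
      (binomF (r+1) x) := (summable_binom (r+1) hx).hasSum
  have hs2 : HasSum (fun n : ℕ => risingFactorial (r+1) n / n.factorial * x ^ (n+1))
      (x * binomF (r+1) x) :=
    (hs1.mul_left x).congr_fun (fun n => by ring)
  set e : ℕ → ℝ := fun n => Nat.casesOn n 0
    (fun m => risingFactorial (r+1) m / m.factorial * x ^ (m+1)) with he
  have hs3 : HasSum e (x * binomF (r+1) x) := by
    refine (hasSum_nat_add_iff' 1).1 ?_
    simpa [he] using hs2
  have hs4 := hs1.sub hs3
  have hfun : ∀ n : ℕ, risingFactorial (r+1) n / n.factorial * x ^ n - e n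
      = risingFactorial r n / n.factorial * x ^ n := by
    intro n
    cases n with
    | zero => simp [he, rf_zero]
    | succ m =>
      have hm : ((m.factorial : ℝ)) ≠ 0 := Nat.cast_ne_zero.2 m.factorial_ne_zero
      have hm1 : ((m:ℝ)+1) ≠ 0 := by positivity
      simp only [he, rf_succ' r m, rf_succ (r+1) m, Nat.factorial_succ]
      push_cast
      field_simp
      ring
  have hs5 := hs4.congr_fun (fun n => (hfun n).symm)
  have : binomF r x = binomF (r+1) x - x * binomF (r+1) x := hs5.tsum_eq
  rw [this]; ring

lemma binomF_hasDerivAt (r : ℝ) {ρ : ℝ} (hρ0 : 0 < ρ) (hρ1 : ρ < 1) {x : ℝ} (hx : |x| < ρ) :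
    HasDerivAt (fun y => binomF r y) (r * binomF (r+1) x) x := by
  set M := ⌈|r|⌉₊ with hM
  set u : ℕ → ℝ := fun j => |risingFactorial r j| / j.factorial * ((j:ℝ) * ρ^(j-1)) with hu_def
  have hu : Summable u := by
    have hbase := (summable_pow_succ_geo (M+1) hρ0.le hρ1).mul_left ρ⁻¹
    refine Summable.of_nonneg_of_le (fun j => ?_) (fun j => ?_) hbase
    · have := abs_nonneg (risingFactorial r j)
      have : (0:ℝ) ≤ |risingFactorial r j| / j.factorial := by positivity
      positivity
    · cases j with
      | zero => simp [hu_def]; positivity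
      | succ m =>
        have h1 : |risingFactorial r (m+1)| / (m+1).factorial ≤ (((m:ℝ)+1)+1)^M := by
          rw [div_le_iff₀ (by positivity)]
          have := abs_rf_le' r (m+1)
          push_cast at this ⊢
          linarith
        have h2 : u (m+1) = (|risingFactorial r (m+1)| / (m+1).factorial) * (((m:ℝ)+1) * ρ^m) := by
          simp [hu_def]
        rw [h2]
        have h3 : (|risingFactorial r (m+1)| / (m+1).factorial) * (((m:ℝ)+1) * ρ^m)
            ≤ (((m:ℝ)+1)+1)^M * (((m:ℝ)+1) * ρ^m) := by
          apply mul_le_mul_of_nonneg_right h1 (by positivity)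
        refine h3.trans ?_
        have h4 : (((m:ℝ)+1)+1)^M * (((m:ℝ)+1) * ρ^m) ≤ (((m:ℝ)+1)+1)^(M+1) * ρ^m := by
          rw [pow_succ]
          have : ((m:ℝ)+1) ≤ ((m:ℝ)+1)+1 := by linarith
          calc (((m:ℝ)+1)+1)^M * (((m:ℝ)+1) * ρ^m)
              ≤ (((m:ℝ)+1)+1)^M * ((((m:ℝ)+1)+1) * ρ^m) := by
                apply mul_le_mul_of_nonneg_left ?_ (by positivity)
                apply mul_le_mul_of_nonneg_right this (by positivity)
            _ = (((m:ℝ)+1)+1)^M * (((m:ℝ)+1)+1) * ρ^m := by ring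
        refine h4.trans ?_
        have h5 : ρ^m = ρ⁻¹ * ρ^(m+1) := by
          rw [pow_succ]; field_simp
        rw [h5]
        push_cast
        ring_nf
        exact le_refl _
  have key := hasDerivAt_tsum_of_isPreconnected hu (Metric.isOpen_ball (x := (0:ℝ)) (ε := ρ))
    (convex_ball (0:ℝ) ρ).isPreconnected
    (g := fun j y => risingFactorial r j / j.factorial * y ^ j)
    (g' := fun j y => risingFactorial r j / j.factorial * ((j:ℝ) * y ^ (j-1)))
    (fun j y _ => (hasDerivAt_pow j y).const_mul _)
    (fun j y hy => ?_) (Metric.mem_ball_self hρ0)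
    (by simpa using summable_binom r (show |(0:ℝ)| < 1 by simpa using zero_lt_one.trans_le hρ1.le))
    (show x ∈ Metric.ball (0:ℝ) ρ by simpa [Real.dist_eq] using hx)
  · have heq : ∑' j : ℕ, risingFactorial r j / j.factorial * ((j:ℝ) * x ^ (j-1))
        = r * binomF (r+1) x := by
      have hx1 : |x| < 1 := hx.trans hρ1
      have h1 : HasSum (fun j : ℕ => risingFactorial r (j+1) / (j+1).factorial
          * (((j:ℝ)+1) * x ^ j)) (r * binomF (r+1) x) := by
        refine ((summable_binom (r+1) hx1).hasSum.mul_left r).congr_fun (fun j => ?_)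
        have hm : ((j.factorial : ℝ)) ≠ 0 := Nat.cast_ne_zero.2 j.factorial_ne_zero
        have hm1 : ((j:ℝ)+1) ≠ 0 := by positivity
        rw [rf_succ' r j, Nat.factorial_succ]
        push_cast
        field_simp
      have h2 : HasSum (fun j : ℕ => risingFactorial r j / j.factorial * ((j:ℝ) * x ^ (j-1)))
          (r * binomF (r+1) x) := by
        refine (hasSum_nat_add_iff' 1).1 ?_
        simp only [Finset.range_one, Finset.sum_singleton, Nat.cast_zero, zero_mul, mul_zero,
          sub_zero]
        refine h1.congr_fun (fun j => ?_)
        simp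
      exact h2.tsum_eq
    rw [← heq]
    exact key
  · -- derivative bound
    have hynorm : |y| ≤ ρ := by
      have : dist y 0 < ρ := hy
      rw [Real.dist_eq, sub_zero] at this
      exact this.le
    rw [Real.norm_eq_abs, abs_mul, abs_mul]
    rw [hu_def]
    simp only
    rw [abs_div, Nat.abs_cast, abs_of_nonneg (Nat.cast_nonneg (α := ℝ) _)]
    apply mul_le_mul_of_nonneg_left ?_ (by positivity)
    apply mul_le_mul_of_nonneg_left ?_ (by positivity)
    rw [abs_pow]
    exact pow_le_pow_left₀ (abs_nonneg y) hynorm _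

lemma binomF_eq (r : ℝ) {x : ℝ} (hx : |x| < 1) :
    binomF r x = (1 - x) ^ (-r : ℝ) := by
  set ρ : ℝ := (|x| + 1)/2 with hρ
  have hρ0 : 0 < ρ := by have := abs_nonneg x; rw [hρ]; linarith
  have hρ1 : ρ < 1 := by rw [hρ]; linarith
  have hxρ : |x| < ρ := by rw [hρ]; linarith
  set s : Set ℝ := Metric.ball (0:ℝ) ρ with hs
  have hmem : ∀ {y : ℝ}, |y| < ρ → y ∈ s := by
    intro y hy
    simp [hs, Real.dist_eq, hy]
  have hball : ∀ y ∈ s, |y| < ρ := by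
    intro y hy
    simpa [hs, Real.dist_eq] using hy
  have hΦ : ∀ y ∈ s, HasDerivAt (fun w => (1-w) ^ (r:ℝ) * binomF r w) 0 y := by
    intro y hy
    have hyρ := hball y hy
    have hy1 : |y| < 1 := hyρ.trans hρ1
    have h1y : 0 < 1 - y := by
      have := abs_lt.1 hy1
      linarith [this.2]
    have hd1 : HasDerivAt (fun w : ℝ => (1-w) ^ (r:ℝ)) (-1 * r * (1-y)^(r-1)) y := by
      have hbase : HasDerivAt (fun w : ℝ => 1 - w) (-1) y := by
        simpa using (hasDerivAt_id y).const_sub 1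
      exact hbase.rpow_const (Or.inl h1y.ne')
    have hd2 := binomF_hasDerivAt r hρ0 hρ1 hyρ
    have hd := hd1.mul hd2
    have hval : -1 * r * (1-y)^(r-1) * binomF r y + (1-y) ^ (r:ℝ) * (r * binomF (r+1) y)
        = 0 := by
      rw [binomF_funeq r hy1]
      rw [show (r:ℝ) = (r-1)+1 by ring, Real.rpow_add h1y, Real.rpow_one]
      ring
    rwa [hval] at hd
  have h1x : 0 < 1 - x := by
    have := abs_lt.1 hx
    linarith [this.2]
  have hconst : (1-x) ^ (r:ℝ) * binomF r x = (1-(0:ℝ)) ^ (r:ℝ) * binomF r 0 := by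
    apply (convex_ball (0:ℝ) ρ).is_const_of_fderivWithin_eq_zero (𝕜 := ℝ)
      (f := fun w => (1-w) ^ (r:ℝ) * binomF r w)
    · intro y hy
      exact ((hΦ y hy).differentiableAt).differentiableWithinAt
    · intro y hy
      rw [fderivWithin_of_isOpen Metric.isOpen_ball hy]
      have := ((hΦ y hy).hasFDerivAt).fderiv
      rw [this]
      ext w
      simp
    · exact hmem hxρ
    · exact hmem (by simpa using hρ0)
  rw [show (1:ℝ)-0 = 1 by norm_num, binomF_zero, Real.one_rpow, mul_one] at hconst
  have hA : (1-x) ^ (r:ℝ) ≠ 0 := (Real.rpow_pos_of_pos h1x r).ne'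
  rw [Real.rpow_neg h1x.le]
  field_simp
  linear_combination hconst

lemma hasSum_binom (r : ℝ) {x : ℝ} (hx : |x| < 1) :
    HasSum (fun j : ℕ => risingFactorial r j / j.factorial * x ^ j) ((1 - x) ^ (-r : ℝ)) := by
  have h := (summable_binom r hx).hasSum
  rwa [show (∑' j : ℕ, risingFactorial r j / j.factorial * x ^ j) = (1-x) ^ (-r : ℝ)
    from binomF_eq r hx] at h

end Binom

section Comb

variable {b : ℝ}

/-- `uu b n k = 1 / (4^k (b+1/2)_k k! (n-2k)!)` -/
noncomputable def uu (b : ℝ) (n k : ℕ) : ℝ :=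
  ((4:ℝ)^k * risingFactorial (b+1/2) k * k.factorial * (n - 2*k).factorial)⁻¹

lemma inv_mul_cancel_aux {a D : ℝ} (ha : a ≠ 0) : (a * D)⁻¹ * a = D⁻¹ := by
  rw [mul_inv, mul_comm a⁻¹ D⁻¹, mul_assoc, inv_mul_cancel₀ ha, mul_one]

lemma key_sum (hb' : ∀ m : ℕ, b + 1/2 + (m:ℝ) ≠ 0) (h2b' : ∀ m : ℕ, 2*b + (m:ℝ) ≠ 0) :
    ∀ n : ℕ, ∑ k ∈ Finset.range (n/2+1), uu b n k
      = 2^n * risingFactorial b n / (risingFactorial (2*b) n * n.factorial) := by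
  have hp : ∀ k : ℕ, risingFactorial (b+1/2) k ≠ 0 := rf_ne_zero hb'
  intro n
  induction n with
  | zero => simp [uu, rf_zero]
  | succ n IH =>
    set K := (n+1)/2 with hK
    -- claim 1 : telescoping
    have claim1 : ∑ k ∈ Finset.range (K+1),
        ((2*b+(n:ℝ))*((n:ℝ)+1) - 2*(b+(n:ℝ))*((n:ℝ)+1-2*(k:ℝ))) * uu b (n+1) k = 0 := by
      set ψ : ℕ → ℝ := fun k => Nat.casesOn k 0
        (fun k' => -(((n:ℝ)+1-2*(k':ℝ)) * ((n:ℝ)-2*(k':ℝ)) * uu b (n+1) k')) with hψ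
      have tele : ∀ k ∈ Finset.range (K+1),
          ((2*b+(n:ℝ))*((n:ℝ)+1) - 2*(b+(n:ℝ))*((n:ℝ)+1-2*(k:ℝ))) * uu b (n+1) k
            = ψ (k+1) - ψ k := by
        intro k hk
        rw [Finset.mem_range] at hk
        cases k with
        | zero =>
          show ((2*b+(n:ℝ))*((n:ℝ)+1) - 2*(b+(n:ℝ))*((n:ℝ)+1-2*((0:ℕ):ℝ))) * uu b (n+1) 0
            = -(((n:ℝ)+1-2*((0:ℕ):ℝ)) * ((n:ℝ)-2*((0:ℕ):ℝ)) * uu b (n+1) 0) - 0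
          push_cast
          ring
        | succ k' =>
          have hk2 : 2*(k'+1) ≤ n+1 := by
            have : k'+1 ≤ K := by omega
            omega
          show ((2*b+(n:ℝ))*((n:ℝ)+1) - 2*(b+(n:ℝ))*((n:ℝ)+1-2*(((k'+1:ℕ)):ℝ))) * uu b (n+1) (k'+1)
            = -(((n:ℝ)+1-2*((k'+1:ℕ):ℝ)) * ((n:ℝ)-2*((k'+1:ℕ):ℝ)) * uu b (n+1) (k'+1))
              - -(((n:ℝ)+1-2*((k':ℕ):ℝ)) * ((n:ℝ)-2*((k':ℕ):ℝ)) * uu b (n+1) k')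
          obtain ⟨j, hj⟩ : ∃ j, n = 2*k'+1+j := ⟨n - (2*k'+1), by omega⟩
          subst hj
          have e1 : (2*k'+1+j+1) - 2*(k'+1) = j := by omega
          have e2 : (2*k'+1+j+1) - 2*k' = j+2 := by omega
          have h4 : ((4:ℝ)^k') ≠ 0 := by positivity
          have h5 : risingFactorial (b+1/2) k' ≠ 0 := hp k'
          have h6 : (b+1/2+(k':ℝ)) ≠ 0 := hb' k'
          have h7 : ((k'.factorial : ℝ)) ≠ 0 := Nat.cast_ne_zero.2 k'.factorial_ne_zero
          have h8 : ((j.factorial : ℝ)) ≠ 0 := Nat.cast_ne_zero.2 j.factorial_ne_zero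
          have h9 : ((k':ℝ)+1) ≠ 0 := by positivity
          have h10 : ((j:ℝ)+1) ≠ 0 := by positivity
          have h11 : ((j:ℝ)+2) ≠ 0 := by positivity
          set D : ℝ := (4:ℝ)^k' * risingFactorial (b+1/2) k' * (k'.factorial:ℝ) * (j.factorial:ℝ)
            with hD
          have hu0 : uu b (2*k'+1+j+1) k' * (((j:ℝ)+2)*((j:ℝ)+1)) = D⁻¹ := by
            have hden : ((4:ℝ)^k' * risingFactorial (b+1/2) k' * ((k'.factorial:ℕ):ℝ)
                * (((j+2).factorial:ℕ):ℝ)) = (((j:ℝ)+2)*((j:ℝ)+1)) * D := by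
              rw [hD, show (j+2).factorial = (j+2)*((j+1)*j.factorial) from by
                rw [Nat.factorial_succ, Nat.factorial_succ]]
              push_cast
              ring
            rw [uu, e2, hden]
            exact inv_mul_cancel_aux (by positivity)
          have hu1 : uu b (2*k'+1+j+1) (k'+1) * (4*(b+1/2+(k':ℝ))*((k':ℝ)+1)) = D⁻¹ := by
            have hden : ((4:ℝ)^(k'+1) * risingFactorial (b+1/2) (k'+1) * (((k'+1).factorial:ℕ):ℝ)
                * ((j.factorial:ℕ):ℝ)) = (4*(b+1/2+(k':ℝ))*((k':ℝ)+1)) * D := by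
              rw [hD, pow_succ, rf_succ, Nat.factorial_succ]
              push_cast
              ring
            rw [uu, e1, hden]
            have hA : (4*(b+1/2+(k':ℝ))*((k':ℝ)+1)) ≠ 0 :=
              mul_ne_zero (mul_ne_zero (by norm_num) h6) h9
            exact inv_mul_cancel_aux hA
          push_cast
          linear_combination hu1 - hu0
      rw [Finset.sum_congr rfl tele, Finset.sum_range_sub ψ]
      have hψ0 : ψ 0 = 0 := rfl
      rw [hψ0, sub_zero]
      -- ψ (K+1) = 0
      show -(((n:ℝ)+1-2*(K:ℝ)) * ((n:ℝ)-2*(K:ℝ)) * uu b (n+1) K) = 0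
      rcases Nat.even_or_odd n with ⟨m, hm⟩ | ⟨m, hm⟩
      · have h1 : K = m := by omega
        have h2 : (n:ℝ) - 2*(K:ℝ) = 0 := by
          rw [h1, hm]; push_cast; ring
        rw [h2]; ring
      · have h1 : K = m+1 := by omega
        have h2 : (n:ℝ) + 1 - 2*(K:ℝ) = 0 := by
          rw [h1, hm]; push_cast; ring
        rw [h2]; ring
    -- claim 2
    have termwise : ∀ k : ℕ, 2*k ≤ n → ((n:ℝ)+1-2*(k:ℝ)) * uu b (n+1) k = uu b n k := by
      intro k hk
      obtain ⟨j, hj⟩ : ∃ j, n = 2*k+j := ⟨n - 2*k, by omega⟩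
      subst hj
      have e1 : (2*k+j+1) - 2*k = j+1 := by omega
      have e2 : (2*k+j) - 2*k = j := by omega
      rw [uu, uu, e1, e2, Nat.factorial_succ]
      set P := risingFactorial (b+1/2) k with hP
      set Q := (4:ℝ)^k with hQ
      have h4 : Q ≠ 0 := by rw [hQ]; positivity
      have h5 : P ≠ 0 := hp k
      have h7 : ((k.factorial : ℝ)) ≠ 0 := Nat.cast_ne_zero.2 k.factorial_ne_zero
      have h8 : ((j.factorial : ℝ)) ≠ 0 := Nat.cast_ne_zero.2 j.factorial_ne_zero
      have h10 : ((j:ℝ)+1) ≠ 0 := by positivity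
      push_cast
      field_simp
      ring
    have claim2 : ∑ k ∈ Finset.range (K+1), ((n:ℝ)+1-2*(k:ℝ)) * uu b (n+1) k
        = ∑ k ∈ Finset.range (n/2+1), uu b n k := by
      rcases Nat.even_or_odd n with ⟨m, hm⟩ | ⟨m, hm⟩
      · have hKm : K = m := by omega
        have hn2 : n/2 = m := by omega
        rw [hKm, hn2]
        refine Finset.sum_congr rfl (fun k hk => ?_)
        rw [Finset.mem_range] at hk
        exact termwise k (by omega)
      · have hKm : K = m+1 := by omega
        have hn2 : n/2 = m := by omega
        rw [hKm, hn2, Finset.sum_range_succ]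
        have hz : ((n:ℝ)+1-2*((m+1:ℕ):ℝ)) = 0 := by
          subst hm; push_cast; ring
        rw [hz, zero_mul, add_zero]
        refine Finset.sum_congr rfl (fun k hk => ?_)
        rw [Finset.mem_range] at hk
        exact termwise k (by omega)
    -- recurrence
    have hrec : (2*b+(n:ℝ))*((n:ℝ)+1) * ∑ k ∈ Finset.range (K+1), uu b (n+1) k
        = 2*(b+(n:ℝ)) * ∑ k ∈ Finset.range (n/2+1), uu b n k := by
      rw [← claim2, Finset.mul_sum, Finset.mul_sum, ← sub_eq_zero, ← Finset.sum_sub_distrib]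
      rw [← claim1]
      refine Finset.sum_congr rfl (fun k hk => ?_)
      ring
    have hS : ∑ k ∈ Finset.range ((n+1)/2+1), uu b (n+1) k
        = 2*(b+(n:ℝ)) * (∑ k ∈ Finset.range (n/2+1), uu b n k)
          / ((2*b+(n:ℝ))*((n:ℝ)+1)) := by
      rw [eq_div_iff ?_]
      · rw [← hrec, ← hK]; ring
      · exact mul_ne_zero (h2b' n) (by positivity)
    rw [hS, IH]
    have h1 : risingFactorial (2*b) n ≠ 0 := rf_ne_zero h2b' n
    have h2 : (2*b+(n:ℝ)) ≠ 0 := h2b' n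
    have h3 : ((n.factorial : ℝ)) ≠ 0 := Nat.cast_ne_zero.2 n.factorial_ne_zero
    have h4 : ((n:ℝ)+1) ≠ 0 := by positivity
    rw [rf_succ b n, rf_succ (2*b) n, Nat.factorial_succ]
    push_cast
    field_simp
    ring

lemma rf_half (a : ℝ) (k : ℕ) :
    risingFactorial a (2*k) = 4^k * risingFactorial (a/2) k * risingFactorial ((a+1)/2) k := by
  induction k with
  | zero => simp [rf_zero]
  | succ m ih =>
    rw [show 2*(m+1) = (2*m)+1+1 from by ring, rf_succ, rf_succ, ih,
      rf_succ (a/2) m, rf_succ ((a+1)/2) m, pow_succ]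
    push_cast
    ring

lemma coeff_eq (a : ℝ) (hb' : ∀ m : ℕ, b + 1/2 + (m:ℝ) ≠ 0) (h2b' : ∀ m : ℕ, 2*b + (m:ℝ) ≠ 0)
    (n : ℕ) :
    ∑ k ∈ Finset.range (n/2+1),
      risingFactorial (a/2) k * risingFactorial ((a+1)/2) k /
        (risingFactorial (b+1/2) k * k.factorial) *
        (risingFactorial (a+2*(k:ℝ)) (n-2*k) / (n-2*k).factorial)
      = 2^n * (risingFactorial a n * risingFactorial b n)
          / (risingFactorial (2*b) n * n.factorial) := by
  have hp : ∀ k : ℕ, risingFactorial (b+1/2) k ≠ 0 := rf_ne_zero hb'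
  have h1 : ∀ k ∈ Finset.range (n/2+1),
      risingFactorial (a/2) k * risingFactorial ((a+1)/2) k /
        (risingFactorial (b+1/2) k * k.factorial) *
        (risingFactorial (a+2*(k:ℝ)) (n-2*k) / (n-2*k).factorial)
      = risingFactorial a n * uu b n k := by
    intro k hk
    rw [Finset.mem_range] at hk
    have h2k : 2*k ≤ n := by omega
    have hsplit : risingFactorial a n
        = risingFactorial a (2*k) * risingFactorial (a+2*(k:ℝ)) (n-2*k) := by
      have := rf_add a (2*k) (n-2*k)
      rw [show 2*k+(n-2*k) = n from by omega] at this
      rw [this]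
      push_cast
      ring_nf
    rw [hsplit, rf_half, uu]
    set P := risingFactorial (b+1/2) k with hP
    set Q := (4:ℝ)^k with hQ
    set A1 := risingFactorial (a/2) k with hA1
    set A2 := risingFactorial ((a+1)/2) k with hA2
    set R := risingFactorial (a+2*(k:ℝ)) (n-2*k) with hR
    have h4 : Q ≠ 0 := by rw [hQ]; positivity
    have h5 : P ≠ 0 := hp k
    have h7 : ((k.factorial : ℝ)) ≠ 0 := Nat.cast_ne_zero.2 k.factorial_ne_zero
    have h8 : (((n-2*k).factorial : ℝ)) ≠ 0 := Nat.cast_ne_zero.2 (n-2*k).factorial_ne_zero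
    field_simp
  rw [Finset.sum_congr rfl h1, ← Finset.mul_sum, key_sum hb' h2b' n]
  ring

end Comb

section Assemble

lemma rpow_split {t : ℝ} (ht : 0 < 1 - t) (r : ℝ) (k : ℕ) :
    t^(2*k) * (1-t) ^ (-(r + 2*(k:ℝ))) = (1-t) ^ (-r) * (t^2/(1-t)^2)^k := by
  have h1 : (1-t) ^ (-(r + 2*(k:ℝ))) = (1-t) ^ (-r) * (1-t) ^ (-(2*(k:ℝ))) := by
    rw [← Real.rpow_add ht]
    ring_nf
  have h2 : (1-t) ^ (-(2*(k:ℝ))) = (((1-t)^2)^k)⁻¹ := by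
    rw [Real.rpow_neg ht.le]
    congr 1
    rw [show (2*(k:ℝ)) = ((2*k : ℕ) : ℝ) by push_cast; ring, Real.rpow_natCast, pow_mul]
  have h3 : t^(2*k) = (t^2)^k := by rw [pow_mul]
  rw [h1, h2, h3, div_pow]
  have h4 : ((1-t)^2)^k ≠ 0 := by positivity
  field_simp

def sigmaEquiv : (Σ n : ℕ, Fin (n/2+1)) ≃ ℕ × ℕ where
  toFun s := (s.2.1, s.1 - 2*s.2.1)
  invFun p := ⟨2*p.1+p.2, ⟨p.1, by omega⟩⟩
  left_inv := by
    rintro ⟨n, ⟨k, hk⟩⟩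
    have h2k : 2*k ≤ n := by omega
    refine Sigma.ext (by simp; omega) ?_
    rw [Fin.heq_ext_iff (by simp; omega)]
  right_inv := by
    rintro ⟨k, j⟩
    show (k, 2*k+j - 2*k) = (k, j)
    exact congrArg (Prod.mk k) (by omega)

end Assemble

theorem stmt_2 (a b : ℝ)
    (h2b : ∀ m : ℕ, 2 * b ≠ -(m : ℝ))
    (hb : ∀ m : ℕ, b + 1 / 2 ≠ -(m : ℝ)) :
    ∃ ε > (0 : ℝ), ∀ z : ℝ, |z| < ε →
      Real.rpow (1 - z) a * hyp2F1 a b (2 * b) (2 * z) =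
        hyp2F1 (a / 2) ((a + 1) / 2) (b + 1 / 2) (z ^ 2 / (1 - z) ^ 2) := by
  refine ⟨1/4, by norm_num, ?_⟩
  intro z hz
  have hb' : ∀ m : ℕ, b + 1/2 + (m:ℝ) ≠ 0 := fun m h => hb m (by linarith)
  have h2b' : ∀ m : ℕ, 2*b + (m:ℝ) ≠ 0 := fun m h => h2b m (by linarith)
  have hz1 : |z| < 1 := hz.trans (by norm_num)
  have hzlt := abs_lt.mp hz
  have h1z : 0 < 1 - z := by linarith [hzlt.2]
  have haz : |(|z|)| < 1 := by rwa [abs_abs]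
  have h1za : 0 < 1 - |z| := by linarith [hz1]
  -- coefficients
  set c : ℕ → ℝ := fun k => risingFactorial (a/2) k * risingFactorial ((a+1)/2) k /
    (risingFactorial (b+1/2) k * k.factorial) with hc
  set y : ℝ := z^2/(1-z)^2 with hy
  set y' : ℝ := |z|^2/(1-|z|)^2 with hy'
  have hy'0 : 0 ≤ y' := by positivity
  have hy'1 : y' < 1 := by
    rw [hy', div_lt_one (by positivity)]
    have h2 : |z| < 1 - |z| := by
      have : |z| < 1/4 := hz
      linarith
    calc |z|^2 ≤ |z| * |z| := by rw [sq]
      _ < (1-|z|) * (1-|z|) := by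
          apply mul_lt_mul' h2.le h2 (abs_nonneg z) (by linarith)
      _ = (1-|z|)^2 := by rw [sq]
  -- double-indexed family and its bound
  set f : ℕ × ℕ → ℝ := fun p => c p.1 *
    (risingFactorial (a + 2*(p.1:ℝ)) p.2 / p.2.factorial) * z ^ (2*p.1 + p.2) with hfdef
  set g : ℕ × ℕ → ℝ := fun p => (|c p.1| * |z|^(2*p.1)) *
    (risingFactorial (|a| + 2*(p.1:ℝ)) p.2 / p.2.factorial * |z| ^ p.2) with hgdef
  clear_value c
  have hgrow : ∀ k : ℕ, HasSum (fun j => g (k, j))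
      ((|c k| * |z|^(2*k)) * (1-|z|) ^ (-(|a| + 2*(k:ℝ)))) := by
    intro k
    exact (hasSum_binom (|a| + 2*(k:ℝ)) haz).mul_left _
  have hcabs : Summable (fun k => |c k| * y'^k) := by
    have h := (summable_hyp (a/2) ((a+1)/2) (b+1/2) hb'
      (x := y') (by rwa [abs_of_nonneg hy'0])).abs
    apply h.congr
    intro k
    rw [abs_mul, abs_pow, abs_of_nonneg hy'0, hc]
  have hsumrows : Summable (fun k => ∑' j, g (k, j)) := by
    have hclosed : Summable (fun k => (|c k| * |z|^(2*k)) * (1-|z|) ^ (-(|a| + 2*(k:ℝ)))) := by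
      have h2 := (hcabs.mul_left ((1-|z|) ^ (-|a|) : ℝ))
      apply h2.congr
      intro k
      have hs := rpow_split h1za |a| k
      calc ((1-|z|) ^ (-|a|) : ℝ) * (|c k| * y'^k)
          = |c k| * ((1-|z|) ^ (-|a|) * y'^k) := by ring
        _ = |c k| * (|z|^(2*k) * (1-|z|) ^ (-(|a| + 2*(k:ℝ)))) := by rw [hy', ← hs]
        _ = |c k| * |z|^(2*k) * (1-|z|) ^ (-(|a| + 2*(k:ℝ))) := by ring
    apply hclosed.congr
    intro k
    exact ((hgrow k).tsum_eq).symm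
  have hgnn : ∀ p, 0 ≤ g p := by
    rintro ⟨k, j⟩
    have h1 : (0:ℝ) ≤ |a| + 2*(k:ℝ) := by positivity
    have h2 : (0:ℝ) ≤ risingFactorial (|a| + 2*(k:ℝ)) j := rf_nonneg h1 j
    have : (0:ℝ) ≤ risingFactorial (|a| + 2*(k:ℝ)) j / j.factorial := by positivity
    positivity
  have hg : Summable g := by
    rw [summable_prod_of_nonneg hgnn]
    exact ⟨fun k => (hgrow k).summable, hsumrows⟩
  have hbound : ∀ p, ‖f p‖ ≤ g p := by
    rintro ⟨k, j⟩
    have hb1 : |risingFactorial (a + 2*(k:ℝ)) j| ≤ risingFactorial (|a| + 2*(k:ℝ)) j := by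
      refine (abs_rf_le _ j).trans (rf_mono (abs_nonneg _) ?_ j)
      calc |a + 2*(k:ℝ)| ≤ |a| + |2*(k:ℝ)| := abs_add_le _ _
        _ = |a| + 2*(k:ℝ) := by rw [abs_of_nonneg (by positivity : (0:ℝ) ≤ 2*(k:ℝ))]
    have heq : ‖f (k, j)‖ = |c k| * (|risingFactorial (a + 2*(k:ℝ)) j| / j.factorial)
        * (|z|^(2*k) * |z|^j) := by
      simp only [hfdef, Real.norm_eq_abs]
      rw [abs_mul, abs_mul, abs_div, abs_pow, pow_add, Nat.abs_cast]
    rw [heq]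
    simp only [hgdef]
    calc |c k| * (|risingFactorial (a + 2*(k:ℝ)) j| / j.factorial) * (|z|^(2*k) * |z|^j)
        ≤ |c k| * (risingFactorial (|a| + 2*(k:ℝ)) j / j.factorial) * (|z|^(2*k) * |z|^j) := by
          gcongr
      _ = (|c k| * |z|^(2*k)) * (risingFactorial (|a| + 2*(k:ℝ)) j / j.factorial * |z|^j) := by
          ring
  have hf : Summable f := Summable.of_norm_bounded hg hbound
  -- row sums of f
  have hfrow : ∀ k : ℕ, HasSum (fun j => f (k, j))
      (c k * z^(2*k) * (1-z) ^ (-(a + 2*(k:ℝ)))) := by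
    intro k
    have h := (hasSum_binom (a + 2*(k:ℝ)) hz1).mul_left (c k * z^(2*k))
    refine h.congr_fun (fun j => ?_)
    simp only [hfdef]
    rw [pow_add]
    ring
  -- Fubini 1 : tsum f = (1-z)^(-a) * hyp2F1 RHS
  have hstep1 : ∑' p, f p = (1-z) ^ (-a) * hyp2F1 (a/2) ((a+1)/2) (b+1/2) y := by
    rw [Summable.tsum_prod' hf (fun k => (hfrow k).summable)]
    have h1 : ∀ k : ℕ, ∑' j, f (k, j) = (1-z) ^ (-a) * (c k * y^k) := by
      intro k
      rw [(hfrow k).tsum_eq]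
      have hs := rpow_split h1z a k
      calc c k * z^(2*k) * (1-z) ^ (-(a + 2*(k:ℝ)))
          = c k * (z^(2*k) * (1-z) ^ (-(a + 2*(k:ℝ)))) := by ring
        _ = c k * ((1-z) ^ (-a) * y^k) := by rw [hs, hy]
        _ = (1-z) ^ (-a) * (c k * y^k) := by ring
    rw [tsum_congr h1, tsum_mul_left, hyp2F1]
    congr 1
    refine tsum_congr (fun k => ?_)
    rw [hc]
  -- Fubini 2 : tsum f = hyp2F1 a b (2b) (2z)
  have hstep2 : ∑' p, f p = hyp2F1 a b (2*b) (2*z) := by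
    have hsig : Summable (fun s : (Σ n : ℕ, Fin (n/2+1)) => f (sigmaEquiv s)) :=
      (sigmaEquiv.summable_iff (f := f)).2 hf
    rw [← sigmaEquiv.tsum_eq f]
    rw [Summable.tsum_sigma' (fun n => Summable.of_finite) hsig]
    have h1 : ∀ n : ℕ, ∑' (k : Fin (n/2+1)), f (sigmaEquiv ⟨n, k⟩)
        = (2^n * (risingFactorial a n * risingFactorial b n)
            / (risingFactorial (2*b) n * n.factorial)) * z^n := by
      intro n
      rw [tsum_fintype]
      have h2 : ∀ (k : Fin (n/2+1)), f (sigmaEquiv ⟨n, k⟩) = f (k.1, n - 2*k.1) := fun k => rfl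
      rw [Finset.sum_congr rfl (fun k _ => h2 k)]
      rw [Fin.sum_univ_eq_sum_range (fun k => f (k, n - 2*k))]
      have h3 : ∀ k ∈ Finset.range (n/2+1), f (k, n - 2*k)
          = c k * (risingFactorial (a + 2*(k:ℝ)) (n - 2*k) / (n - 2*k).factorial) * z^n := by
        intro k hk
        rw [Finset.mem_range] at hk
        simp only [hfdef]
        rw [show 2*k + (n - 2*k) = n from by omega]
      rw [Finset.sum_congr rfl h3, ← Finset.sum_mul]
      congr 1
      rw [show c = fun k => risingFactorial (a/2) k * risingFactorial ((a+1)/2) k /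
        (risingFactorial (b+1/2) k * (k.factorial:ℝ)) from hc]
      exact coeff_eq a hb' h2b' n
    rw [tsum_congr h1, hyp2F1]
    refine tsum_congr (fun n => ?_)
    rw [mul_pow]
    ring
  -- conclusion
  have hkey : (1-z) ^ (-a) * hyp2F1 (a/2) ((a+1)/2) (b+1/2) y = hyp2F1 a b (2*b) (2*z) := by
    rw [← hstep1, hstep2]
  have hgoal : Real.rpow (1-z) a = (1-z) ^ a := rfl
  rw [hgoal, ← hkey, ← mul_assoc, ← Real.rpow_add h1z]
  norm_num
end

section
/- Define the Motzkin numbers $M_n$ by $M_0=1$ and $M_{n+1}=M_n+\sum_{k=0}^{n-1}M_k M_{n-1-k}$. Then for every positive integer $n$, $\det(M_{i+j})_{0\le i,j\le n-1}=1$. -/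
open Finset Matrix

/-- Motzkin triangle built from the sequence `M`. -/
private def Tm (M : ℕ → ℤ) : ℕ → ℕ → ℤ
  | n, 0 => M n
  | n, k+1 => ∑ j ∈ Finset.range n, Tm M j k * M (n - 1 - j)

private lemma Tm_zero_of_lt (M : ℕ → ℤ) : ∀ k n, n < k → Tm M n k = 0 := by
  intro k
  induction k with
  | zero => intro n h; omega
  | succ k ih =>
      intro n h
      rw [Tm]
      apply Finset.sum_eq_zero
      intro j hj
      rw [ih j (by simp at hj; omega)]
      ring

private lemma Tm_diag (M : ℕ → ℤ) (h0 : M 0 = 1) : ∀ n, Tm M n n = 1 := by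
  intro n
  induction n with
  | zero => simp [Tm, h0]
  | succ n ih =>
      rw [Tm, Finset.sum_range_succ]
      rw [Finset.sum_eq_zero (fun j hj => by
        rw [Tm_zero_of_lt M n j (by simp at hj; omega)]; ring)]
      simp [ih, h0]

private lemma tri_exchange (f : ℕ → ℕ → ℤ) (n : ℕ) :
    ∑ l ∈ range n, ∑ j ∈ range l, f j (l - 1 - j) =
      ∑ j ∈ range n, ∑ i ∈ range (n - 1 - j), f j i := by
  induction n with
  | zero => simp
  | succ n ih =>
      rw [Finset.sum_range_succ, ih, Finset.sum_range_succ]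
      have h1 : (n + 1 - 1 - n : ℕ) = 0 := by omega
      rw [h1]
      simp only [Finset.range_zero, Finset.sum_empty, add_zero]
      rw [← Finset.sum_add_distrib]
      apply Finset.sum_congr rfl
      intro j hj
      simp only [Finset.mem_range] at hj
      have h2 : (n + 1 - 1 - j : ℕ) = (n - 1 - j) + 1 := by omega
      rw [h2, Finset.sum_range_succ]

section main
variable (M : ℕ → ℤ) (h0 : M 0 = 1)
  (hrec : ∀ n : ℕ, M (n + 1) = M n + ∑ k ∈ Finset.range n, M k * M (n - 1 - k))

include hrec

private lemma key_aux (n k : ℕ) :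
    ∑ j ∈ range n, Tm M j k * M (n - j) = Tm M n (k+1) + Tm M n (k+2) := by
  have expand : ∀ j ∈ range n, Tm M j k * M (n - j) =
      Tm M j k * M (n - 1 - j)
        + ∑ i ∈ range (n - 1 - j), Tm M j k * (M i * M (n - 1 - j - 1 - i)) := by
    intro j hj
    simp only [Finset.mem_range] at hj
    have h2 : (n - j : ℕ) = (n - 1 - j) + 1 := by omega
    rw [h2, hrec, mul_add, Finset.mul_sum]
  rw [Finset.sum_congr rfl expand, Finset.sum_add_distrib]
  have part1 : ∑ j ∈ range n, Tm M j k * M (n - 1 - j) = Tm M n (k+1) := by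
    rw [Tm]
  have hTk2 : Tm M n (k+2) =
      ∑ l ∈ range n, ∑ j ∈ range l, Tm M j k * (M (l - 1 - j) * M (n - 1 - l)) := by
    rw [show (k + 2) = (k + 1) + 1 from rfl, Tm]
    apply Finset.sum_congr rfl
    intro l hl
    rw [Tm, Finset.sum_mul]
    exact Finset.sum_congr rfl fun j hj => by ring
  have part2 : ∑ j ∈ range n, ∑ i ∈ range (n - 1 - j),
      Tm M j k * (M i * M (n - 1 - j - 1 - i)) = Tm M n (k+2) := by
    rw [hTk2, ← tri_exchange (fun j i => Tm M j k * (M i * M (n - 1 - j - 1 - i))) n]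
    apply Finset.sum_congr rfl
    intro l hl
    apply Finset.sum_congr rfl
    intro j hj
    simp only [Finset.mem_range] at hl hj
    have : n - 1 - j - 1 - (l - 1 - j) = n - 1 - l := by omega
    rw [this]
  rw [part1, part2]

private lemma Tm_rec_zero (n : ℕ) : Tm M (n+1) 0 = Tm M n 0 + Tm M n 1 := by
  show M (n+1) = M n + Tm M n 1
  rw [hrec, Tm]
  rfl

include h0

private lemma Tm_rec (n k : ℕ) :
    Tm M (n+1) (k+1) = Tm M n k + Tm M n (k+1) + Tm M n (k+2) := by
  rw [Tm, Finset.sum_range_succ]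
  have h1 : (n + 1 - 1 - n : ℕ) = 0 := by omega
  rw [h1, h0, mul_one]
  have h2 : ∀ j ∈ range n, Tm M j k * M (n + 1 - 1 - j) = Tm M j k * M (n - j) := by
    intro j hj
    simp only [Finset.mem_range] at hj
    have h3 : n + 1 - 1 - j = n - j := by omega
    rw [h3]
  rw [Finset.sum_congr rfl h2, key_aux M hrec]
  ring

private lemma key (j : ℕ) : ∀ i : ℕ,
    M (i + j) = ∑ k ∈ range (i + j + 1), Tm M i k * Tm M j k := by
  induction j with
  | zero =>
      intro i
      rw [Finset.sum_eq_single 0]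
      · simp [Tm, h0]
      · intro k hk hk0
        obtain ⟨k', rfl⟩ := Nat.exists_eq_succ_of_ne_zero hk0
        rw [show Tm M 0 (k' + 1) = 0 from by rw [Tm]; simp]
        ring
      · intro h; exact absurd (Finset.mem_range.2 (by omega)) h
  | succ j ih =>
      intro i
      have h1 : i + (j + 1) = (i + 1) + j := by omega
      rw [h1, ih (i + 1)]
      set m := i + j + 1 with hm
      have hL : (i + 1) + j + 1 = m + 1 := by omega
      rw [hL]
      rw [Finset.sum_range_succ' (fun k => Tm M (i+1) k * Tm M j k) m]
      rw [Finset.sum_range_succ' (fun k => Tm M i k * Tm M (j+1) k) m]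
      simp only [Tm_rec_zero M hrec i, Tm_rec_zero M hrec j]
      have hstep : ∀ k, Tm M (i+1) (k+1) * Tm M j (k+1)
          = (Tm M i k + Tm M i (k+1) + Tm M i (k+2)) * Tm M j (k+1) := by
        intro k; rw [Tm_rec M h0 hrec]
      have hstep' : ∀ k, Tm M i (k+1) * Tm M (j+1) (k+1)
          = Tm M i (k+1) * (Tm M j k + Tm M j (k+1) + Tm M j (k+2)) := by
        intro k; rw [Tm_rec M h0 hrec]
      simp only [hstep, hstep', add_mul, mul_add]
      rw [Finset.sum_add_distrib, Finset.sum_add_distrib,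
        Finset.sum_add_distrib, Finset.sum_add_distrib]
      have hA : ∑ k ∈ range m, Tm M i k * Tm M j (k+1) + Tm M i m * Tm M j (m+1)
          = Tm M i 0 * Tm M j 1 + ∑ k ∈ range m, Tm M i (k+1) * Tm M j (k+2) := by
        rw [← Finset.sum_range_succ (fun k => Tm M i k * Tm M j (k+1)) m,
          Finset.sum_range_succ' (fun k => Tm M i k * Tm M j (k+1)) m]
        exact add_comm _ _
      have hB : ∑ k ∈ range m, Tm M i (k+1) * Tm M j k + Tm M i (m+1) * Tm M j m
          = Tm M i 1 * Tm M j 0 + ∑ k ∈ range m, Tm M i (k+2) * Tm M j (k+1) := by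
        rw [← Finset.sum_range_succ (fun k => Tm M i (k+1) * Tm M j k) m,
          Finset.sum_range_succ' (fun k => Tm M i (k+1) * Tm M j k) m]
        exact add_comm _ _
      have hz1 : Tm M j (m+1) = 0 := Tm_zero_of_lt M (m+1) j (by omega)
      have hz2 : Tm M i (m+1) = 0 := Tm_zero_of_lt M (m+1) i (by omega)
      rw [hz1, mul_zero, add_zero] at hA
      rw [hz2, zero_mul, add_zero] at hB
      linarith [hA, hB]

private lemma key' (i j N : ℕ) (hi : i < N) :
    M (i + j) = ∑ k ∈ range N, Tm M i k * Tm M j k := by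
  rw [key M h0 hrec j i]
  rcases le_or_gt N (i + j + 1) with h | h
  · rw [← Finset.sum_subset (Finset.range_subset_range.2 h)]
    intro k hk hk'
    simp only [Finset.mem_range, not_lt] at hk hk'
    rw [Tm_zero_of_lt M k i (by omega)]
    ring
  · rw [Finset.sum_subset (Finset.range_subset_range.2 (le_of_lt h))]
    intro k hk hk'
    simp only [Finset.mem_range, not_lt] at hk hk'
    rw [Tm_zero_of_lt M k i (by omega)]
    ring

end main

theorem stmt_5 (M : ℕ → ℤ) (h0 : M 0 = 1)
    (hrec : ∀ n : ℕ, M (n + 1) = M n + ∑ k ∈ Finset.range n, M k * M (n - 1 - k))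
    (n : ℕ) (hn : 1 ≤ n) :
    Matrix.det (Matrix.of fun i j : Fin n => M (i + j)) = 1 := by
  set L : Matrix (Fin n) (Fin n) ℤ := Matrix.of (fun i k : Fin n => Tm M i k) with hL
  have hfact : (Matrix.of fun i j : Fin n => M (i + j)) = L * L.transpose := by
    ext i j
    rw [Matrix.mul_apply]
    simp only [hL, Matrix.of_apply, Matrix.transpose_apply]
    rw [key' M h0 hrec i j n i.isLt, ← Fin.sum_univ_eq_sum_range]
  have hLtri : L.BlockTriangular OrderDual.toDual := by
    intro i j hij
    simp only [OrderDual.toDual_lt_toDual] at hij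
    exact Tm_zero_of_lt M j i hij
  have hdetL : L.det = 1 := by
    rw [Matrix.det_of_lowerTriangular L hLtri]
    exact Finset.prod_eq_one fun i _ => Tm_diag M h0 i
  rw [hfact, Matrix.det_mul, Matrix.det_transpose, hdetL]
  norm_num
end

section
/- With $S_n(q)$ and $S^{(t)}_n(q)$ as in the q-Schröder setting, for every positive integer $n$, $\det S^{(1)}_{n-1}(q)=\det S^{(0)}_{n}(q)$ (where $\det S^{(1)}_0(q)$ is interpreted as $1$). -/
open Polynomial

/-- The matrix `S^{(t)}_n(q) = (q^{(i-j)(i-j-1)} S_{i+j+t}(q))_{0 ≤ i,j ≤ n-1}`;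
note `(i-j)(i-j-1) ≥ 0`, so the entries lie in `ℤ[q]`. -/
noncomputable def SMat (S : ℕ → Polynomial ℤ) (t n : ℕ) :
    Matrix (Fin n) (Fin n) (Polynomial ℤ) :=
  Matrix.of fun i j =>
    X ^ ((((i : ℤ) - (j : ℤ)) * ((i : ℤ) - (j : ℤ) - 1)).toNat) * S (i + j + t)

open Finset

/-! Auxiliary machinery -/

noncomputable def Xp (e : ℤ) : Polynomial ℤ := X ^ e.toNat

lemma Xp_natCast (e : ℕ) : Xp (e : ℤ) = X ^ e := by simp [Xp]

lemma Xp_zero : Xp 0 = 1 := by simp [Xp]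

lemma Xp_add {a b : ℤ} (ha : 0 ≤ a) (hb : 0 ≤ b) : Xp (a + b) = Xp a * Xp b := by
  unfold Xp; rw [Int.toNat_add ha hb, pow_add]

lemma consec (a : ℤ) : 0 ≤ a * (a - 1) := by
  rcases le_or_gt a 0 with h | h
  · have e : a * (a - 1) = (-a) * (1 - a) := by ring
    rw [e]; exact mul_nonneg (by omega) (by omega)
  · exact mul_nonneg (by omega) (by omega)

lemma Xp_mul_Xp {a b c d : ℤ} (ha : 0 ≤ a) (hb : 0 ≤ b) (hc : 0 ≤ c) (hd : 0 ≤ d)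
    (h : a + b = c + d) : Xp a * Xp b = Xp c * Xp d := by
  rw [← Xp_add ha hb, ← Xp_add hc hd, h]

lemma XpXp (u : Polynomial ℤ) {a b c d : ℤ} (ha : 0 ≤ a) (hb : 0 ≤ b) (hc : 0 ≤ c)
    (hd : 0 ≤ d) (h : a + b = c + d) : Xp a * (Xp b * u) = Xp c * (Xp d * u) := by
  have key := Xp_mul_Xp ha hb hc hd h
  calc Xp a * (Xp b * u) = (Xp a * Xp b) * u := by ring
    _ = (Xp c * Xp d) * u := by rw [key]
    _ = Xp c * (Xp d * u) := by ring

lemma XpXp2 (u v : Polynomial ℤ) {a b c d : ℤ} (ha : 0 ≤ a) (hb : 0 ≤ b) (hc : 0 ≤ c)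
    (hd : 0 ≤ d) (h : a + b = c + d) :
    Xp a * (Xp b * u * v) = Xp c * v * (Xp d * u) := by
  have key := Xp_mul_Xp ha hb hc hd h
  calc Xp a * (Xp b * u * v) = (Xp a * Xp b) * (u * v) := by ring
    _ = (Xp c * Xp d) * (u * v) := by rw [key]
    _ = Xp c * v * (Xp d * u) := by ring

/-- entry of `S^{(0)}` -/
noncomputable def ent (S : ℕ → Polynomial ℤ) (a b : ℕ) : Polynomial ℤ :=
  Xp (((a:ℤ) - b) * ((a:ℤ) - b - 1)) * S (a + b)

/-- entry of `S^{(1)}` -/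
noncomputable def ent1 (S : ℕ → Polynomial ℤ) (a b : ℕ) : Polynomial ℤ :=
  Xp (((a:ℤ) - b) * ((a:ℤ) - b - 1)) * S (a + b + 1)

/-- entries of the row-operation matrix `P` -/
noncomputable def pent (S : ℕ → Polynomial ℤ) (i l : ℕ) : Polynomial ℤ :=
  if i = l then 1 else if l < i then
    -(Xp (((i:ℤ) - l) * ((i:ℤ) + 3*l - 1)) * S (i-1-l)
        + if l+1 = i then Xp (4*(i:ℤ) - 3) else 0)
  else 0

/-- entries of the result `C = P * S⁰` -/
noncomputable def cent (S : ℕ → Polynomial ℤ) (i j : ℕ) : Polynomial ℤ :=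
  if i = 0 then Xp ((j:ℤ) * ((j:ℤ) + 1)) * S j
  else ∑ s ∈ Finset.range j,
    Xp (((i:ℤ) - 1 - s) * ((i:ℤ) - 1 - s - 1)) * S (i + s) *
      (Xp (((j:ℤ) - 1 - s) * ((j:ℤ) + 3*s + 4)) * S (j - 1 - s))

/-- entries of the upper unitriangular matrix `U` -/
noncomputable def uent (S : ℕ → Polynomial ℤ) (s j : ℕ) : Polynomial ℤ :=
  if s ≤ j then Xp (((j:ℤ) - s) * ((j:ℤ) + 3*s + 5)) * S (j - s) else 0

/-- The key identity: the recurrence, reorganized as a row operation statement. -/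
lemma key_s8 (S : ℕ → Polynomial ℤ)
    (hrec : ∀ n : ℕ, 1 ≤ n → S n = X ^ (2 * n - 1) * S (n - 1) +
      ∑ k ∈ Finset.range n, X ^ (2 * (k + 1) * (n - 1 - k)) * S (n - 1 - k) * S k)
    (i j : ℕ) (hi : 1 ≤ i) :
    ent S i j
      = Xp (4 * (i:ℤ) - 3) * ent S (i - 1) j
        + (∑ l ∈ Finset.range i,
            Xp (((i:ℤ) - l) * ((i:ℤ) + 3*l - 1)) * S (i-1-l) * ent S l j)
        + ∑ s ∈ Finset.range j,
            Xp (((i:ℤ) - 1 - s) * ((i:ℤ) - 1 - s - 1)) * S (i + s) *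
              (Xp (((j:ℤ) - 1 - s) * ((j:ℤ) + 3*s + 4)) * S (j - 1 - s)) := by
  unfold ent
  rw [hrec (i + j) (by omega), mul_add, Finset.mul_sum, Finset.sum_range_add, ← add_assoc]
  refine congrArg₂ (· + ·) ?_ ?_
  · refine congrArg₂ (· + ·) ?_ ?_
    · -- the main term
      have h1 : ((2 * (i + j) - 1 : ℕ) : ℤ) = 2*(i:ℤ)+2*(j:ℤ)-1 := by omega
      have h2 : ((i - 1 : ℕ) : ℤ) = (i:ℤ) - 1 := by omega
      rw [← Xp_natCast (2 * (i + j) - 1), show i - 1 + j = i + j - 1 from by omega]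
      exact XpXp _ (consec _) (by positivity) (by omega) (consec _) (by rw [h1, h2]; ring)
    · -- the sum over k < i, reflected
      refine Eq.trans (Finset.sum_congr rfl fun x hx => ?_) (Finset.sum_range_reflect _ i)
      have hx' : x < i := Finset.mem_range.mp hx
      have h1 : ((i + j - 1 - x : ℕ) : ℤ) = (i:ℤ)+(j:ℤ)-1-(x:ℤ) := by omega
      have h2 : ((2 * (x + 1) * (i + j - 1 - x) : ℕ) : ℤ)
          = 2*((x:ℤ)+1)*((i:ℤ)+(j:ℤ)-1-(x:ℤ)) := by push_cast [h1]; ring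
      have h3 : ((i - 1 - x : ℕ) : ℤ) = (i:ℤ) - 1 - (x:ℤ) := by omega
      rw [show i - 1 - (i - 1 - x) = x from by omega,
        show (i - 1 - x) + j = i + j - 1 - x from by omega,
        ← Xp_natCast (2 * (x + 1) * (i + j - 1 - x))]
      exact XpXp2 _ _ (consec _) (by positivity)
        (mul_nonneg (by omega) (by omega)) (consec _) (by rw [h2, h3]; ring)
  · -- the sum over s < j
    refine Finset.sum_congr rfl fun s hs => ?_
    have hs' : s < j := Finset.mem_range.mp hs
    have h1 : ((j - 1 - s : ℕ) : ℤ) = (j:ℤ)-1-(s:ℤ) := by omega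
    have h2 : ((2 * (i + s + 1) * (j - 1 - s) : ℕ) : ℤ)
        = 2*((i:ℤ)+(s:ℤ)+1)*((j:ℤ)-1-(s:ℤ)) := by push_cast [h1]; ring
    rw [show i + j - 1 - (i + s) = j - 1 - s from by omega,
      ← Xp_natCast (2 * (i + s + 1) * (j - 1 - s))]
    exact XpXp2 _ _ (consec _) (by positivity) (consec _)
      (mul_nonneg (by omega) (by omega)) (by rw [h2]; ring)

/-- Row operations: applying `pent` to the rows of `S⁰` yields `cent`. -/
lemma sum_pent (S : ℕ → Polynomial ℤ)
    (hrec : ∀ n : ℕ, 1 ≤ n → S n = X ^ (2 * n - 1) * S (n - 1) +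
      ∑ k ∈ Finset.range n, X ^ (2 * (k + 1) * (n - 1 - k)) * S (n - 1 - k) * S k)
    (m i j : ℕ) (him : i < m + 1) :
    ∑ l ∈ Finset.range (m+1), pent S i l * ent S l j = cent S i j := by
  rcases Nat.eq_zero_or_pos i with hi0 | hi1
  · subst hi0
    rw [Finset.sum_eq_single 0]
    · have hp : pent S 0 0 = 1 := by simp [pent]
      rw [hp, one_mul]
      unfold ent cent
      rw [if_pos rfl, Nat.zero_add]
      rw [show (((0:ℕ):ℤ) - (j:ℤ)) * (((0:ℕ):ℤ) - (j:ℤ) - 1) = (j:ℤ) * ((j:ℤ) + 1)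
        from by push_cast; ring]
    · intro b _ hb
      have : ¬ (0 = b) := fun h => hb h.symm
      simp [pent, this]
    · intro h
      exact absurd (Finset.mem_range.mpr (by omega)) h
  · have hsub : ∑ l ∈ Finset.range (m+1), pent S i l * ent S l j
        = ∑ l ∈ Finset.range (i+1), pent S i l * ent S l j := by
      refine (Finset.sum_subset ?_ ?_).symm
      · intro x hx; simp only [Finset.mem_range] at *; omega
      · intro x hx hnx
        simp only [Finset.mem_range] at hx hnx
        have h1 : ¬ (i = x) := by omega
        have h2 : ¬ (x < i) := by omega
        simp [pent, h1, h2]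
    rw [hsub, Finset.sum_range_succ]
    have hp : pent S i i = 1 := by simp [pent]
    rw [hp, one_mul]
    have hterm : ∀ l ∈ Finset.range i, pent S i l * ent S l j
        = -(Xp (((i:ℤ) - l) * ((i:ℤ) + 3*l - 1)) * S (i-1-l) * ent S l j)
          + -((if l+1 = i then Xp (4*(i:ℤ) - 3) else 0) * ent S l j) := by
      intro l hl
      have hl' : l < i := Finset.mem_range.mp hl
      have h1 : ¬ (i = l) := by omega
      rw [pent, if_neg h1, if_pos hl']
      ring
    rw [Finset.sum_congr rfl hterm, Finset.sum_add_distrib]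
    have hsingle : ∑ l ∈ Finset.range i,
        -((if l+1 = i then Xp (4*(i:ℤ) - 3) else 0) * ent S l j)
        = -(Xp (4*(i:ℤ) - 3) * ent S (i-1) j) := by
      rw [Finset.sum_neg_distrib]
      congr 1
      rw [Finset.sum_eq_single (i-1)]
      · rw [if_pos (by omega)]
      · intro b _ hb
        rw [if_neg (by omega), zero_mul]
      · intro h
        exact absurd (Finset.mem_range.mpr (by omega)) h
    rw [hsingle, Finset.sum_neg_distrib]
    have hcent : cent S i j = ∑ s ∈ Finset.range j,
        Xp (((i:ℤ) - 1 - s) * ((i:ℤ) - 1 - s - 1)) * S (i + s) *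
          (Xp (((j:ℤ) - 1 - s) * ((j:ℤ) + 3*s + 4)) * S (j - 1 - s)) := by
      rw [cent, if_neg (by omega)]
    rw [hcent, key_s8 S hrec i j hi1]
    ring

/-- The lower-right block of `C` equals `S¹ * U`. -/
lemma cent_succ_sum (S : ℕ → Polynomial ℤ) (m i j : ℕ) (hj : j < m) :
    cent S (i+1) (j+1) = ∑ s ∈ Finset.range m, ent1 S i s * uent S s j := by
  have hrestrict : ∑ s ∈ Finset.range m, ent1 S i s * uent S s j
      = ∑ s ∈ Finset.range (j+1), ent1 S i s * uent S s j := by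
    refine (Finset.sum_subset ?_ ?_).symm
    · intro x hx; simp only [Finset.mem_range] at *; omega
    · intro x hx hnx
      simp only [Finset.mem_range] at hx hnx
      have : ¬ (x ≤ j) := by omega
      simp [uent, this]
  rw [hrestrict, cent, if_neg (by omega)]
  refine Finset.sum_congr rfl fun s hs => ?_
  have hs' : s < j + 1 := Finset.mem_range.mp hs
  rw [uent, if_pos (by omega : s ≤ j)]
  rw [show i + 1 + s = i + s + 1 from by omega,
    show ((i+1:ℕ):ℤ) - 1 - (s:ℤ) = (i:ℤ) - (s:ℤ) from by push_cast; ring,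
    show ((j+1:ℕ):ℤ) - 1 - (s:ℤ) = (j:ℤ) - (s:ℤ) from by push_cast; ring,
    show ((j+1:ℕ):ℤ) + 3*(s:ℤ) + 4 = (j:ℤ) + 3*(s:ℤ) + 5 from by push_cast; ring,
    show (j + 1) - 1 - s = j - s from by omega]
  rfl

theorem stmt_8 (S : ℕ → Polynomial ℤ) (h0 : S 0 = 1)
    (hrec : ∀ n : ℕ, 1 ≤ n → S n = X ^ (2 * n - 1) * S (n - 1) +
      ∑ k ∈ Finset.range n, X ^ (2 * (k + 1) * (n - 1 - k)) * S (n - 1 - k) * S k)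
    (n : ℕ) (hn : 1 ≤ n) :
    (SMat S 1 (n - 1)).det = (SMat S 0 n).det := by
  obtain ⟨m, rfl⟩ : ∃ m, n = m + 1 := ⟨n - 1, by omega⟩
  show (SMat S 1 m).det = (SMat S 0 (m+1)).det
  -- the matrices
  have hM : SMat S 0 (m+1) = Matrix.of (fun i j : Fin (m+1) => ent S i j) := rfl
  have hT : SMat S 1 m = Matrix.of (fun i j : Fin m => ent1 S i j) := rfl
  set P : Matrix (Fin (m+1)) (Fin (m+1)) (Polynomial ℤ) :=
    Matrix.of (fun i l : Fin (m+1) => pent S i l) with hPdef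
  set Cm : Matrix (Fin (m+1)) (Fin (m+1)) (Polynomial ℤ) :=
    Matrix.of (fun i j : Fin (m+1) => cent S i j) with hCdef
  set U : Matrix (Fin m) (Fin m) (Polynomial ℤ) :=
    Matrix.of (fun s j : Fin m => uent S s j) with hUdef
  -- det P = 1
  have hPtri : P.BlockTriangular OrderDual.toDual := by
    intro i j hij
    have hij' : (i:ℕ) < (j:ℕ) := hij
    have h1 : ¬ ((i:ℕ) = (j:ℕ)) := by omega
    have h2 : ¬ ((j:ℕ) < (i:ℕ)) := by omega
    show pent S (i:ℕ) (j:ℕ) = 0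
    rw [pent, if_neg h1, if_neg h2]
  have hPdet : P.det = 1 := by
    rw [Matrix.det_of_lowerTriangular P hPtri]
    refine Finset.prod_eq_one fun i _ => ?_
    simp [hPdef, pent]
  -- P * M = C
  have hPM : P * SMat S 0 (m+1) = Cm := by
    rw [hM]
    refine Matrix.ext fun i j => ?_
    rw [Matrix.mul_apply]
    simp only [hPdef, hCdef, Matrix.of_apply]
    rw [Fin.sum_univ_eq_sum_range (fun l => pent S (i:ℕ) l * ent S l (j:ℕ)) (m+1)]
    exact sum_pent S hrec m i j i.isLt
  -- det M = det C
  have hdet0 : (SMat S 0 (m+1)).det = Cm.det := by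
    calc (SMat S 0 (m+1)).det = P.det * (SMat S 0 (m+1)).det := by rw [hPdet, one_mul]
      _ = (P * SMat S 0 (m+1)).det := (Matrix.det_mul _ _).symm
      _ = Cm.det := by rw [hPM]
  -- det C = det of its lower-right block
  have hCm : Cm.det = (Cm.submatrix Fin.succ Fin.succ).det := by
    rw [Matrix.det_succ_column_zero]
    rw [Finset.sum_eq_single 0]
    · simp only [hCdef, Fin.val_zero, pow_zero, one_mul, Matrix.of_apply,
        Fin.succAbove_zero]
      rw [show cent S 0 0 = 1 from by simp [cent, h0, Xp_zero], one_mul]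
    · intro b _ hb
      have hb' : (b : ℕ) ≠ 0 := fun h => hb (Fin.ext h)
      have hc : cent S (b : ℕ) 0 = 0 := by
        rw [cent, if_neg hb']
        simp
      simp only [hCdef, Matrix.of_apply, Fin.val_zero]
      rw [hc, mul_zero, zero_mul]
    · intro h
      exact absurd (Finset.mem_univ 0) h
  -- block = S¹ * U
  have hblock : Cm.submatrix Fin.succ Fin.succ = SMat S 1 m * U := by
    refine Matrix.ext fun i j => ?_
    rw [Matrix.submatrix_apply, Matrix.mul_apply, hT]
    simp only [hCdef, hUdef, Matrix.of_apply, Fin.val_succ]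
    rw [Fin.sum_univ_eq_sum_range (fun s => ent1 S (i:ℕ) s * uent S s (j:ℕ)) m]
    exact cent_succ_sum S m i j j.isLt
  -- det U = 1
  have hUtri : U.BlockTriangular id := by
    intro i j hij
    have hij' : (j:ℕ) < (i:ℕ) := hij
    have h1 : ¬ ((i:ℕ) ≤ (j:ℕ)) := by omega
    show uent S (i:ℕ) (j:ℕ) = 0
    rw [uent, if_neg h1]
  have hUdet : U.det = 1 := by
    rw [Matrix.det_of_upperTriangular hUtri]
    refine Finset.prod_eq_one fun i _ => ?_
    simp [hUdef, uent, h0, Xp_zero, sub_self]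
  calc (SMat S 1 m).det = (SMat S 1 m).det * U.det := by rw [hUdet, mul_one]
    _ = (SMat S 1 m * U).det := (Matrix.det_mul _ _).symm
    _ = (Cm.submatrix Fin.succ Fin.succ).det := by rw [hblock]
    _ = Cm.det := hCm.symm
    _ = (SMat S 0 (m+1)).det := hdet0.symm
end

section
/- With $S_n(q)$ and $S^{(t)}_n(q)$ as in the q-Schröder setting, for every integer $n\ge 3$, $\det S^{(0)}_n(q)\,\det S^{(2)}_{n-2}(q) = \det S^{(0)}_{n-1}(q)\,\det S^{(2)}_{n-1}(q) - q^{2(n-1)}\left(\det S^{(1)}_{n-1}(q)\right)^2$. -/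
open Polynomial
section Aux
open Matrix

section DJ

variable {R : Type*} [CommRing R]

/-- Equiv grouping {0, last} as `Fin 2` and the interior as `Fin n`. -/
def cornerEquiv (n : ℕ) : Fin 2 ⊕ Fin n ≃ Fin (n+2) where
  toFun := Sum.elim (fun a => if a = 0 then 0 else Fin.last (n+1)) (fun i => i.succ.castSucc)
  invFun k :=
    if h0 : k = 0 then Sum.inl 0
    else if hl : k = Fin.last (n+1) then Sum.inl 1
    else Sum.inr ⟨(k : ℕ) - 1, by
      have h2 : (k : ℕ) ≠ n+1 := fun hh => hl (Fin.ext (by simp [Fin.last, hh]))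
      have h3 : (k : ℕ) ≠ 0 := fun hh => h0 (Fin.ext (by simp [hh]))
      have := k.isLt; omega⟩
  left_inv := by
    have hlast0 : (Fin.last (n+1) : Fin (n+2)) ≠ 0 := by
      intro h; have := congrArg Fin.val h; simp at this
    rintro (a | i)
    · fin_cases a
      · simp
      · simp [hlast0]
    · have h1 : (i.succ.castSucc : Fin (n+2)) ≠ 0 := by
        intro h; have := congrArg Fin.val h; simp at this
      have h2 : (i.succ.castSucc : Fin (n+2)) ≠ Fin.last (n+1) := by
        intro h; have := congrArg Fin.val h; simp at this; omega
      simp [h1, h2]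
  right_inv := by
    have hlast0 : (Fin.last (n+1) : Fin (n+2)) ≠ 0 := by
      intro h; have := congrArg Fin.val h; simp at this
    intro k
    by_cases h0 : k = 0
    · subst h0; simp
    · by_cases hl : k = Fin.last (n+1)
      · subst hl; simp [hlast0]
      · simp only [h0, hl, dif_neg, not_false_iff]
        have h3 : (k : ℕ) ≠ 0 := fun hh => h0 (Fin.ext (by simp [hh]))
        apply Fin.ext
        simp [Fin.val_succ]
        omega

/-- Identity with first and last columns replaced by adjugate columns. -/
noncomputable def djB {n : ℕ} (M : Matrix (Fin (n+2)) (Fin (n+2)) R) :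
    Matrix (Fin (n+2)) (Fin (n+2)) R :=
  Matrix.of fun i j =>
    if j = 0 then adjugate M i 0
    else if j = Fin.last (n+1) then adjugate M i (Fin.last (n+1))
    else if i = j then 1 else 0

noncomputable def djC {n : ℕ} (M : Matrix (Fin (n+2)) (Fin (n+2)) R) :
    Matrix (Fin (n+2)) (Fin (n+2)) R :=
  Matrix.of fun i j =>
    if j = 0 then (if i = 0 then M.det else 0)
    else if j = Fin.last (n+1) then (if i = Fin.last (n+1) then M.det else 0)
    else M i j

lemma djMB {n : ℕ} (M : Matrix (Fin (n+2)) (Fin (n+2)) R) : M * djB M = djC M := by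
  ext i j
  rw [mul_apply]
  by_cases h0 : j = 0
  · subst h0
    have : ∀ k, M i k * djB M k 0 = M i k * adjugate M k 0 := by
      intro k; simp [djB]
    simp_rw [this]
    have := congrFun (congrFun (mul_adjugate M) i) 0
    rw [mul_apply] at this
    rw [this]
    simp [djC, one_apply, Matrix.smul_apply]
  · by_cases hl : j = Fin.last (n+1)
    · subst hl
      have : ∀ k, M i k * djB M k (Fin.last (n+1)) = M i k * adjugate M k (Fin.last (n+1)) := by
        intro k; simp [djB, h0]
      simp_rw [this]
      have := congrFun (congrFun (mul_adjugate M) i) (Fin.last (n+1))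
      rw [mul_apply] at this
      rw [this]
      simp [djC, h0, one_apply, Matrix.smul_apply]
    · have : ∀ k, M i k * djB M k j = if k = j then M i k else 0 := by
        intro k; simp [djB, h0, hl]
      simp_rw [this]
      simp [djC, h0, hl]

lemma det_djC {n : ℕ} (M : Matrix (Fin (n+2)) (Fin (n+2)) R) :
    (djC M).det = M.det * (M.det * (M.submatrix (fun i : Fin n => i.succ.castSucc)
      (fun i : Fin n => i.succ.castSucc)).det) := by
  have hlast0 : (Fin.last (n+1)) ≠ (0 : Fin (n+2)) := by
    intro h; have := congrArg Fin.val h; simp at this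
  rw [det_succ_column_zero]
  rw [Finset.sum_eq_single 0 ?h0 (by simp)]
  case h0 =>
    intro i _ hi
    have : djC M i 0 = 0 := by simp [djC, hi]
    rw [this]; ring
  have h00 : djC M 0 0 = M.det := by simp [djC]
  rw [h00, Fin.succAbove_zero]
  simp only [Fin.val_zero, pow_zero, one_mul]
  congr 1
  rw [det_succ_column _ (Fin.last n)]
  rw [Finset.sum_eq_single (Fin.last n) ?hl (by simp)]
  case hl =>
    intro i _ hi
    have hne : i.succ ≠ Fin.last (n+1) := by
      rw [← Fin.succ_last]; exact fun h => hi (Fin.succ_injective _ h)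
    have : ((djC M).submatrix Fin.succ Fin.succ) i (Fin.last n) = 0 := by
      simp [djC, Fin.succ_last, hlast0, hne]
    rw [this]; ring
  have hll : ((djC M).submatrix Fin.succ Fin.succ) (Fin.last n) (Fin.last n) = M.det := by
    simp [djC, Fin.succ_last, hlast0]
  rw [hll]
  have hsign : ((-1 : R)) ^ ((Fin.last n : ℕ) + (Fin.last n : ℕ)) = 1 :=
    Even.neg_one_pow ⟨(Fin.last n : ℕ), rfl⟩
  rw [hsign, one_mul, Fin.succAbove_last]
  congr 1
  have hmat : ((djC M).submatrix Fin.succ Fin.succ).submatrix Fin.castSucc Fin.castSucc =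
      M.submatrix (fun i : Fin n => i.succ.castSucc) (fun i : Fin n => i.succ.castSucc) := by
    ext i j
    have h2 : (Fin.succ j).castSucc ≠ Fin.last (n+1) := by
      intro h; have := congrArg Fin.val h; simp [Fin.val_succ] at this; omega
    simp [djC, h2, Fin.succ_castSucc, Fin.succ_ne_zero, -Fin.castSucc_succ]
  rw [hmat]

lemma det_djB {n : ℕ} (M : Matrix (Fin (n+2)) (Fin (n+2)) R) :
    (djB M).det =
      adjugate M 0 0 * adjugate M (Fin.last (n+1)) (Fin.last (n+1)) -
        adjugate M 0 (Fin.last (n+1)) * adjugate M (Fin.last (n+1)) 0 := by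
  have hlast0 : (Fin.last (n+1) : Fin (n+2)) ≠ 0 := by
    intro h; have := congrArg Fin.val h; simp at this
  have key : (djB M).submatrix (cornerEquiv n) (cornerEquiv n) =
      fromBlocks
        !![adjugate M 0 0, adjugate M 0 (Fin.last (n+1));
           adjugate M (Fin.last (n+1)) 0, adjugate M (Fin.last (n+1)) (Fin.last (n+1))]
        0
        (Matrix.of fun (i : Fin n) (a : Fin 2) =>
          if a = 0 then adjugate M i.succ.castSucc 0
          else adjugate M i.succ.castSucc (Fin.last (n+1)))
        1 := by
    ext x y
    rcases x with a | i <;> rcases y with b | j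
    · fin_cases a <;> fin_cases b <;>
        simp [cornerEquiv, djB, fromBlocks, hlast0]
    · have h1 : (j.succ.castSucc : Fin (n+2)) ≠ 0 := by
        intro h; have := congrArg Fin.val h; simp at this
      have h2 : (j.succ.castSucc : Fin (n+2)) ≠ Fin.last (n+1) := by
        intro h; have := congrArg Fin.val h; simp at this; omega
      fin_cases a <;>
        simp [cornerEquiv, djB, fromBlocks, h1, h2, hlast0, Ne.symm h1, Ne.symm h2, -Fin.castSucc_succ]
    · fin_cases b <;> simp [cornerEquiv, djB, fromBlocks, hlast0]
    · have h1 : (j.succ.castSucc : Fin (n+2)) ≠ 0 := by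
        intro h; have := congrArg Fin.val h; simp at this
      have h2 : (j.succ.castSucc : Fin (n+2)) ≠ Fin.last (n+1) := by
        intro h; have := congrArg Fin.val h; simp at this; omega
      have h3 : (i.succ.castSucc : Fin (n+2)) = j.succ.castSucc ↔ i = j := by
        constructor
        · intro h
          have := congrArg Fin.val h; simp at this; exact Fin.ext this
        · intro h; rw [h]
      simp [cornerEquiv, djB, fromBlocks, h1, h2, one_apply, h3]
  have hsub := Matrix.det_submatrix_equiv_self (cornerEquiv n) (djB M)
  rw [← hsub, key, det_fromBlocks_zero₁₂, det_one, mul_one, det_fin_two]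
  simp

/-- corner entries of the adjugate as corner minors -/
lemma pre_dj (n : ℕ) (M : Matrix (Fin (n+2)) (Fin (n+2)) R) :
    M.det * ((M.submatrix Fin.castSucc Fin.castSucc).det * (M.submatrix Fin.succ Fin.succ).det -
        (M.submatrix Fin.castSucc Fin.succ).det * (M.submatrix Fin.succ Fin.castSucc).det) =
      M.det * (M.det * (M.submatrix (fun i : Fin n => i.succ.castSucc)
        (fun i : Fin n => i.succ.castSucc)).det) := by
  have h1 : M.det * (djB M).det = (djC M).det := by
    rw [← det_mul, djMB]
  rw [det_djB] at h1
  rw [← det_djC]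
  rw [← h1]
  have e00 : adjugate M 0 0 = (M.submatrix Fin.succ Fin.succ).det := by
    rw [adjugate_fin_succ_eq_det_submatrix]
    simp [Fin.succAbove_zero]
  have ell : adjugate M (Fin.last (n+1)) (Fin.last (n+1)) =
      (M.submatrix Fin.castSucc Fin.castSucc).det := by
    rw [adjugate_fin_succ_eq_det_submatrix]
    rw [Fin.succAbove_last]
    rw [show ((Fin.last (n+1) : Fin (n+2)) : ℕ) + ((Fin.last (n+1) : Fin (n+2)) : ℕ)
      = 2 * (n+1) from by simp [Fin.val_last]; ring]
    simp [pow_mul]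
  have e0l : adjugate M 0 (Fin.last (n+1)) =
      (-1 : R) ^ (n+1) * (M.submatrix Fin.castSucc Fin.succ).det := by
    rw [adjugate_fin_succ_eq_det_submatrix]
    rw [Fin.succAbove_last, Fin.succAbove_zero]
    simp [Fin.val_last]
  have el0 : adjugate M (Fin.last (n+1)) 0 =
      (-1 : R) ^ (n+1) * (M.submatrix Fin.succ Fin.castSucc).det := by
    rw [adjugate_fin_succ_eq_det_submatrix]
    rw [Fin.succAbove_last, Fin.succAbove_zero]
    simp [Fin.val_last]
  rw [e00, ell, e0l, el0]
  have hsq : ((-1 : R) ^ (n+1)) * ((-1 : R) ^ (n+1)) = 1 := by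
    rw [← pow_add, ← two_mul]
    exact Even.neg_one_pow ⟨n+1, by ring⟩
  have hmul : ∀ a b : R, ((-1 : R) ^ (n+1) * a) * ((-1 : R) ^ (n+1) * b) = a * b := by
    intro a b
    rw [mul_mul_mul_comm, hsq, one_mul]
  rw [hmul]
  ring
  
end DJ

theorem desnanot_jacobi {R : Type*} [CommRing R] (n : ℕ)
    (M : Matrix (Fin (n+2)) (Fin (n+2)) R) :
    M.det * (M.submatrix (fun i : Fin n => i.succ.castSucc)
        (fun i : Fin n => i.succ.castSucc)).det =
      (M.submatrix Fin.castSucc Fin.castSucc).det * (M.submatrix Fin.succ Fin.succ).det -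
        (M.submatrix Fin.castSucc Fin.succ).det * (M.submatrix Fin.succ Fin.castSucc).det := by
  set P := MvPolynomial (Fin (n+2) × Fin (n+2)) ℤ
  set G : Matrix (Fin (n+2)) (Fin (n+2)) P :=
    Matrix.of fun i j => MvPolynomial.X (i, j) with hG
  have hdetG : G.det ≠ 0 := by
    intro h
    have := congrArg (MvPolynomial.eval (fun p : Fin (n+2) × Fin (n+2) =>
      if p.1 = p.2 then (1 : ℤ) else 0)) h
    rw [RingHom.map_det (MvPolynomial.eval _) G] at this
    have hid : (MvPolynomial.eval fun p : Fin (n+2) × Fin (n+2) =>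
        if p.1 = p.2 then (1 : ℤ) else 0).mapMatrix G = (1 : Matrix _ _ ℤ) := by
      ext i j
      simp [hG, RingHom.mapMatrix_apply, one_apply]
    rw [hid] at this
    simp at this
  have hdj : G.det * (G.submatrix (fun i : Fin n => i.succ.castSucc)
        (fun i : Fin n => i.succ.castSucc)).det =
      (G.submatrix Fin.castSucc Fin.castSucc).det * (G.submatrix Fin.succ Fin.succ).det -
        (G.submatrix Fin.castSucc Fin.succ).det * (G.submatrix Fin.succ Fin.castSucc).det :=
    (mul_left_cancel₀ hdetG (pre_dj n G)).symm
  set f : P →+* R := MvPolynomial.eval₂Hom (Int.castRingHom R) (fun p => M p.1 p.2) with hf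
  have hfG : G.map f = M := by
    ext i j
    rw [hG, hf]
    exact MvPolynomial.eval₂Hom_X' _ _ _
  have := congrArg f hdj
  simp only [_root_.map_mul, _root_.map_sub, RingHom.map_det, RingHom.mapMatrix_apply,
    ← Matrix.submatrix_map, hfG] at this
  exact this

section SMatPart

lemma sq_fact (d : ℤ) : 0 ≤ d * (d - 1) := by
  rcases le_or_gt d 0 with h | h
  · have h1 : d - 1 ≤ 0 := by linarith
    have := mul_nonneg (neg_nonneg.2 h) (neg_nonneg.2 h1)
    nlinarith
  · have h1 : 1 ≤ d := h
    exact mul_nonneg (by linarith) (by linarith)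

lemma det_scale {k : ℕ} (A B : Matrix (Fin k) (Fin k) (Polynomial ℤ)) (r c : Fin k → ℕ)
    (h : ∀ i j, (X : Polynomial ℤ) ^ (r i) * A i j = X ^ (c j) * B i j) :
    (X : Polynomial ℤ) ^ (∑ i, r i) * A.det = X ^ (∑ j, c j) * B.det := by
  have h1 : (Matrix.diagonal fun i => (X : Polynomial ℤ) ^ r i) * A
      = B * Matrix.diagonal fun j => (X : Polynomial ℤ) ^ c j :=
    Matrix.ext fun i j => by
      rw [Matrix.diagonal_mul, Matrix.mul_diagonal, mul_comm (B i j)]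
      exact h i j
  have h2 := congrArg Matrix.det h1
  rw [det_mul, det_mul, det_diagonal, det_diagonal, Finset.prod_pow_eq_pow_sum,
    Finset.prod_pow_eq_pow_sum] at h2
  rw [h2, mul_comm]

end SMatPart


end Aux

section Aux2
open Matrix
section SMatFinal

lemma SMat_cc (S : ℕ → Polynomial ℤ) (m : ℕ) :
    (SMat S 0 (m+3)).submatrix (Fin.castSucc) (Fin.castSucc) = SMat S 0 (m+2) :=
  Matrix.ext fun i j => by
    simp only [SMat, Matrix.submatrix_apply, Matrix.of_apply, Fin.coe_castSucc]

lemma SMat_ss (S : ℕ → Polynomial ℤ) (m : ℕ) :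
    (SMat S 0 (m+3)).submatrix Fin.succ Fin.succ = SMat S 2 (m+2) :=
  Matrix.ext fun i j => by
    simp only [SMat, Matrix.submatrix_apply, Matrix.of_apply, Fin.val_succ]
    congr 2 <;> first | (push_cast; ring_nf) | omega

lemma SMat_inner (S : ℕ → Polynomial ℤ) (m : ℕ) :
    (SMat S 0 (m+3)).submatrix (fun i : Fin (m+1) => i.succ.castSucc)
      (fun i : Fin (m+1) => i.succ.castSucc) = SMat S 2 (m+1) :=
  Matrix.ext fun i j => by
    simp only [SMat, Matrix.submatrix_apply, Matrix.of_apply, Fin.coe_castSucc, Fin.val_succ]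
    congr 2 <;> first | (push_cast; ring_nf) | omega

lemma sum_shift (m : ℕ) :
    (∑ j : Fin (m+2), (2 * (j : ℕ) + 2)) = (∑ i : Fin (m+2), 2 * (i : ℕ)) + 2 * (m+2) := by
  rw [Finset.sum_add_distrib]
  simp [Finset.card_univ]
  ring

lemma SMat_cs (S : ℕ → Polynomial ℤ) (m : ℕ) :
    ((SMat S 0 (m+3)).submatrix Fin.castSucc Fin.succ).det =
      X ^ (2 * (m+2)) * (SMat S 1 (m+2)).det := by
  have hent : ∀ i j : Fin (m+2), (X : Polynomial ℤ) ^ (2 * (i : ℕ)) *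
      ((SMat S 0 (m+3)).submatrix Fin.castSucc Fin.succ i j) =
      X ^ (2 * (j : ℕ) + 2) * (SMat S 1 (m+2)) i j := by
    intro i j
    simp only [SMat, Matrix.submatrix_apply, Matrix.of_apply, Fin.coe_castSucc, Fin.val_succ]
    rw [← mul_assoc, ← mul_assoc, ← pow_add, ← pow_add]
    have harg : (i : ℕ) + ((j : ℕ) + 1) + 0 = (i : ℕ) + (j : ℕ) + 1 := by omega
    rw [harg]
    congr 2
    have ha : (0:ℤ) ≤ ((i:ℤ) - (j:ℤ)) * ((i:ℤ) - (j:ℤ) - 1) := sq_fact _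
    have hb : (0:ℤ) ≤ ((i:ℤ) - ((j:ℤ)+1)) * ((i:ℤ) - ((j:ℤ)+1) - 1) := by
      have := sq_fact ((i:ℤ) - (j:ℤ) - 1)
      nlinarith [this]
    zify
    rw [Int.toNat_of_nonneg ha, Int.toNat_of_nonneg hb]
    ring
  have hs := det_scale _ _ _ _ hent
  rw [sum_shift, pow_add, mul_assoc] at hs
  exact mul_left_cancel₀ (pow_ne_zero _ Polynomial.X_ne_zero) hs

lemma SMat_sc (S : ℕ → Polynomial ℤ) (m : ℕ) :
    ((SMat S 0 (m+3)).submatrix Fin.succ Fin.castSucc).det = (SMat S 1 (m+2)).det := by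
  have hent : ∀ i j : Fin (m+2), (X : Polynomial ℤ) ^ (2 * (i : ℕ)) *
      ((SMat S 1 (m+2)) i j) =
      X ^ (2 * (j : ℕ)) * ((SMat S 0 (m+3)).submatrix Fin.succ Fin.castSucc i j) := by
    intro i j
    simp only [SMat, Matrix.submatrix_apply, Matrix.of_apply, Fin.coe_castSucc, Fin.val_succ]
    rw [← mul_assoc, ← mul_assoc, ← pow_add, ← pow_add]
    have harg : (i : ℕ) + 1 + (j : ℕ) + 0 = (i : ℕ) + (j : ℕ) + 1 := by omega
    rw [harg]
    congr 2
    have ha : (0:ℤ) ≤ ((i:ℤ) - (j:ℤ)) * ((i:ℤ) - (j:ℤ) - 1) := sq_fact _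
    have hb : (0:ℤ) ≤ (((i:ℤ)+1) - (j:ℤ)) * (((i:ℤ)+1) - (j:ℤ) - 1) := sq_fact _
    zify
    rw [Int.toNat_of_nonneg ha, Int.toNat_of_nonneg hb]
    ring
  have hs := det_scale _ _ _ _ hent
  exact (mul_left_cancel₀ (pow_ne_zero _ Polynomial.X_ne_zero) hs).symm

end SMatFinal

end Aux2
theorem stmt_11 (S : ℕ → Polynomial ℤ) (h0 : S 0 = 1)
    (hrec : ∀ n : ℕ, 1 ≤ n → S n = X ^ (2 * n - 1) * S (n - 1) +
      ∑ k ∈ Finset.range n, X ^ (2 * (k + 1) * (n - 1 - k)) * S (n - 1 - k) * S k)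
    (n : ℕ) (hn : 3 ≤ n) :
    (SMat S 0 n).det * (SMat S 2 (n - 2)).det =
      (SMat S 0 (n - 1)).det * (SMat S 2 (n - 1)).det -
        X ^ (2 * (n - 1)) * (SMat S 1 (n - 1)).det ^ 2 := by
  obtain ⟨m, rfl⟩ : ∃ m, n = m + 3 := ⟨n - 3, by omega⟩
  show (SMat S 0 (m+3)).det * (SMat S 2 (m+1)).det =
      (SMat S 0 (m+2)).det * (SMat S 2 (m+2)).det -
        X ^ (2 * (m+2)) * (SMat S 1 (m+2)).det ^ 2
  have hdj := desnanot_jacobi (m+1) (SMat S 0 (m+3))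
  rw [SMat_cc, SMat_ss, SMat_inner, SMat_cs, SMat_sc] at hdj
  rw [hdj]
  ring
end

section
/- Define the large Schröder numbers $s_n$ by $s_0=1$ and $s_n=s_{n-1}+\sum_{k=0}^{n-1}s_{n-1-k}s_k$. Then for every positive integer $n$, $\det(s_{i+j+2})_{0\le i,j\le n-1}=2^{\binom{n+1}{2}}\left(2^{n+1}-1\right)$. -/
open Finset Matrix

namespace Sch14

/-- weighted Motzkin path counts: `u n k` = weight of paths from height 0 to height `k`
in `n` steps, with level weight 2 at height 0 and 3 above, and down weight 2. -/
def u : ℕ → ℕ → ℤ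
  | 0, 0 => 1
  | 0, _+1 => 0
  | n+1, 0 => 2 * u n 0 + 2 * u n 1
  | n+1, k+1 => u n k + 3 * u n (k+1) + 2 * u n (k+2)

@[simp] lemma u_zero_zero : u 0 0 = 1 := rfl
@[simp] lemma u_zero_succ (k : ℕ) : u 0 (k+1) = 0 := rfl
lemma u_succ_zero (n : ℕ) : u (n+1) 0 = 2 * u n 0 + 2 * u n 1 := rfl
lemma u_succ_succ (n k : ℕ) : u (n+1) (k+1) = u n k + 3 * u n (k+1) + 2 * u n (k+2) := rfl

lemma u_eq_zero : ∀ n k, n < k → u n k = 0 := by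
  intro n
  induction n with
  | zero =>
    intro k hk
    cases k with
    | zero => omega
    | succ k => simp
  | succ n ih =>
    intro k hk
    cases k with
    | zero => omega
    | succ k =>
      rw [u_succ_succ, ih k (by omega), ih (k+1) (by omega), ih (k+2) (by omega)]
      ring

@[simp] lemma u_diag : ∀ n, u n n = 1 := by
  intro n
  induction n with
  | zero => rfl
  | succ n ih =>
    rw [u_succ_succ, ih, u_eq_zero n (n+1) (by omega), u_eq_zero n (n+2) (by omega)]
    ring

/-- a double sum reindexing -/
lemma DS (F : ℕ → ℕ → ℤ) : ∀ n, ∑ j ∈ range n, ∑ i ∈ range j, F i j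
    = ∑ i ∈ range n, ∑ a ∈ range (n-1-i), F i (i+1+a) := by
  intro n
  induction n with
  | zero => simp
  | succ n ih =>
    rw [sum_range_succ, ih, sum_range_succ]
    have h1 : ∀ i ∈ range n, ∑ a ∈ range (n+1-1-i), F i (i+1+a)
        = ∑ a ∈ range (n-1-i), F i (i+1+a) + F i n := by
      intro i hi
      rw [mem_range] at hi
      have : n + 1 - 1 - i = (n - 1 - i) + 1 := by omega
      rw [this, sum_range_succ]
      congr 2
      omega
    rw [sum_congr rfl h1, sum_add_distrib]
    simp

lemma sym (m n : ℕ) :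
    ∑ k ∈ range (m+n+2), 2^k * u (m+1) k * u n k
      = ∑ k ∈ range (m+n+2), 2^k * u m k * u (n+1) k := by
  have shift : ∀ f : ℕ → ℤ, f (m+n+1) = 0 →
      (∑ i ∈ range (m+n+1), f (i+1)) + f 0 = ∑ i ∈ range (m+n+1), f i := by
    intro f hf
    rw [← sum_range_succ' f (m+n+1), sum_range_succ, hf, add_zero]
  have E1 := shift (fun i => 2^(i+1) * u m (i+1) * u n i)
    (by rw [u_eq_zero m (m+n+1+1) (by omega)]; ring)
  have E2 := shift (fun i => 2^(i+1) * u m i * u n (i+1))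
    (by rw [u_eq_zero n (m+n+1+1) (by omega)]; ring)
  simp only [show ∀ i:ℕ, i+1+1 = i+2 from fun _ => rfl, Nat.zero_add] at E1 E2
  rw [sum_range_succ', sum_range_succ' (fun k => 2^k * u m k * u (n+1) k) (m+n+1)]
  have eL : ∀ i ∈ range (m+n+1), 2^(i+1) * u (m+1) (i+1) * u n (i+1)
      = 2^(i+1) * u m i * u n (i+1) + 3 * (2^(i+1) * u m (i+1) * u n (i+1))
        + 2^(i+2) * u m (i+2) * u n (i+1) := by
    intro i _
    rw [u_succ_succ]
    ring
  have eR : ∀ i ∈ range (m+n+1), 2^(i+1) * u m (i+1) * u (n+1) (i+1)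
      = 2^(i+1) * u m (i+1) * u n i + 3 * (2^(i+1) * u m (i+1) * u n (i+1))
        + 2^(i+2) * u m (i+1) * u n (i+2) := by
    intro i _
    rw [u_succ_succ]
    ring
  rw [sum_congr rfl eL, sum_congr rfl eR, sum_add_distrib, sum_add_distrib,
    sum_add_distrib, sum_add_distrib, u_succ_zero, u_succ_zero]
  linear_combination E1 - E2

lemma detW (N : ℕ) :
    (Matrix.of fun i k : Fin N => u ((i:ℕ)+1) (k:ℕ)).det = 2^N := by
  have key : ((Matrix.of fun i k : Fin N => u ((i:ℕ)+1) (k:ℕ)).map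
      (Int.cast : ℤ → ℚ)).det = 2^N := by
    set L : Matrix (Fin N) (Fin N) ℚ :=
      Matrix.of fun i j : Fin N => ((2 * u i j + 2 * u i ((j:ℕ)+1) : ℤ) : ℚ) with hL
    set U : Matrix (Fin N) (Fin N) ℚ :=
      Matrix.of fun j k : Fin N => if j = k then (1:ℚ) else
        if (j:ℕ)+1 = (k:ℕ) then 1/2 else 0 with hU
    have factor : (Matrix.of fun i k : Fin N => u ((i:ℕ)+1) (k:ℕ)).map
        (Int.cast : ℤ → ℚ) = L * U := by
      ext i k
      rw [Matrix.mul_apply]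
      have split : ∀ j : Fin N, L i j * U j k
          = (if j = k then L i j else 0) + (if (j:ℕ)+1 = (k:ℕ) then L i j * (1/2) else 0) := by
        intro j
        by_cases h1 : j = k
        · have h2 : ¬ ((j:ℕ)+1 = (k:ℕ)) := by
            subst h1; omega
          simp [hU, h1, h2]
        · by_cases h2 : (j:ℕ)+1 = (k:ℕ)
          · simp [hU, h1, h2]
          · simp [hU, h1, h2]
      rw [Finset.sum_congr rfl fun j _ => split j, Finset.sum_add_distrib,
        Finset.sum_ite_eq' univ k (fun j => L i j), if_pos (mem_univ k)]
      by_cases hk : (k:ℕ) = 0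
      · have : ∀ j : Fin N, ¬ ((j:ℕ)+1 = (k:ℕ)) := by intro j; omega
        rw [Finset.sum_eq_zero fun j _ => if_neg (this j), add_zero]
        simp only [Matrix.map_apply, Matrix.of_apply, hL, hk]
        rw [u_succ_zero]
      · have hkN : (k:ℕ) - 1 < N := by omega
        set j0 : Fin N := ⟨(k:ℕ)-1, hkN⟩ with hj0
        have hcond : ∀ j : Fin N, ((j:ℕ)+1 = (k:ℕ)) ↔ j = j0 := by
          intro j
          rw [Fin.ext_iff]
          simp only [hj0]
          omega
        rw [Finset.sum_congr rfl fun j _ => by rw [if_congr (hcond j) rfl rfl],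
          Finset.sum_ite_eq' univ j0 (fun j => L i j * (1/2)), if_pos (mem_univ j0)]
        have hk' : (k:ℕ) = ((k:ℕ)-1)+1 := by omega
        simp only [Matrix.map_apply, Matrix.of_apply, hL, hj0]
        rw [hk', u_succ_succ]
        push_cast
        ring
    rw [factor, Matrix.det_mul]
    have dU : U.det = 1 := by
      have : U.BlockTriangular id := by
        intro j k hjk
        simp only [id] at hjk
        have h1 : j ≠ k := by exact fun h => absurd h (by rintro rfl; exact lt_irrefl _ hjk)
        have h2 : ¬ ((j:ℕ)+1 = (k:ℕ)) := by
          have := hjk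
          rw [Fin.lt_def] at this
          omega
        simp [hU, h1, h2]
      rw [Matrix.det_of_upperTriangular this]
      simp [hU]
    have dL : L.det = 2^N := by
      have : L.BlockTriangular OrderDual.toDual := by
        intro j k hjk
        have hlt : (j:ℕ) < (k:ℕ) := OrderDual.toDual_lt_toDual.mp hjk
        simp only [hL, Matrix.of_apply]
        rw [u_eq_zero j k (by omega), u_eq_zero j ((k:ℕ)+1) (by omega)]
        push_cast
        ring
      rw [Matrix.det_of_lowerTriangular L this]
      have : ∀ i : Fin N, L i i = 2 := by
        intro i
        simp only [hL, Matrix.of_apply]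
        rw [u_diag, u_eq_zero i ((i:ℕ)+1) (by omega)]
        push_cast
        ring
      rw [Finset.prod_congr rfl fun i _ => this i, Finset.prod_const]
      simp
    rw [dU, dL, mul_one]
  have hmd := (Int.castRingHom ℚ).map_det (Matrix.of fun i k : Fin N => u ((i:ℕ)+1) (k:ℕ))
  have h3 : (((Matrix.of fun i k : Fin N => u ((i:ℕ)+1) (k:ℕ)).det : ℤ) : ℚ) = 2 ^ N := by
    rw [← key]; exact hmd
  exact_mod_cast h3

section

variable (s : ℕ → ℤ) (h0 : s 0 = 1)
  (hrec : ∀ n : ℕ, 1 ≤ n → s n = s (n - 1) + ∑ k ∈ Finset.range n, s (n - 1 - k) * s k)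

include h0 hrec

lemma s_one : s 1 = 2 := by
  have := hrec 1 (by omega)
  simpa [h0] using this

lemma sum_rec (n : ℕ) :
    s (n+2) = 3 * s (n+1) + ∑ j ∈ range n, s (n-j) * s (j+1) := by
  have h := hrec (n+2) (by omega)
  rw [sum_range_succ, sum_range_succ'] at h
  have e1 : ∀ j ∈ range n, s (n + 2 - 1 - (j+1)) * s (j+1) = s (n - j) * s (j+1) := by
    intro j hj; congr 2; omega
  rw [sum_congr rfl e1] at h
  have e2 : n + 2 - 1 - (n+1) = 0 := by omega
  have e3 : n + 2 - 1 - 0 = n + 1 := by omega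
  rw [e2, e3, h0] at h
  simp only [show n+2-1 = n+1 from rfl] at h
  rw [h]; ring

lemma star : ∀ N k, 2 * u N (k+1) = ∑ j ∈ range N, u j k * s (N - j) := by
  intro N
  induction N using Nat.strong_induction_on with
  | _ n ih =>
    match n with
    | 0 => intro k; simp [u]
    | (n+1) =>
      intro k
      have ihn := ih n (by omega)
      rw [u_succ_succ, sum_range_succ]
      rw [show n+1-n = 1 by omega, s_one s h0 hrec]
      have expand : ∀ j ∈ range n, u j k * s (n+1-j)
          = 3 * (u j k * s (n-j)) + ∑ i ∈ range (n-1-j), u j k * (s (n-1-j-i) * s (i+1)) := by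
        intro j hj; rw [mem_range] at hj
        rw [show n+1-j = (n-1-j)+2 by omega, sum_rec s h0 hrec, show n-1-j+1 = n-j by omega,
          ← mul_sum]
        ring
      rw [sum_congr rfl expand, sum_add_distrib, ← mul_sum, ← ihn k]
      have hds := DS (fun i j => u i k * s (j-i) * s (n-j)) n
      have lhsds : ∑ j ∈ range n, ∑ i ∈ range j, u i k * s (j-i) * s (n-j)
          = 4 * u n (k+2) := by
        have e : ∀ j ∈ range n, ∑ i ∈ range j, u i k * s (j-i) * s (n-j)
            = (2 * u j (k+1)) * s (n-j) := by
          intro j hj; rw [mem_range] at hj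
          rw [ih j (by omega) k, sum_mul]
        rw [sum_congr rfl e]
        have : ∑ j ∈ range n, 2 * u j (k+1) * s (n-j)
            = 2 * ∑ j ∈ range n, u j (k+1) * s (n-j) := by
          rw [mul_sum]; exact sum_congr rfl fun j _ => by ring
        rw [this, ← ihn (k+1)]; ring
      have rhsds : ∑ i ∈ range n, ∑ a ∈ range (n-1-i),
            u i k * s (i+1+a-i) * s (n-(i+1+a))
          = ∑ j ∈ range n, ∑ i ∈ range (n-1-j), u j k * (s (n-1-j-i) * s (i+1)) := by
        refine sum_congr rfl fun j hj => sum_congr rfl fun a ha => ?_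
        rw [mem_range] at hj ha
        rw [show j+1+a-j = a+1 by omega, show n-(j+1+a) = n-1-j-a by omega]
        ring
      rw [← rhsds, ← hds, lhsds]
      ring

lemma u0 : ∀ n, u n 0 = s n := by
  intro n
  induction n using Nat.strong_induction_on with
  | _ n ih =>
    match n with
    | 0 => simp [u, h0]
    | (n+1) =>
      rw [u_succ_zero, ih n (by omega)]
      have h := hrec (n+1) (by omega)
      simp only [Nat.add_sub_cancel] at h
      rw [sum_range_succ] at h
      have e1 : ∀ k ∈ range n, s (n-k) * s k = u k 0 * s (n - k) := by
        intro k hk; rw [mem_range] at hk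
        rw [ih k (by omega)]; ring
      rw [sum_congr rfl e1, Nat.sub_self, h0] at h
      rw [star s h0 hrec n 0, h]
      ring

lemma gval : ∀ n m, ∑ k ∈ range (m+n+2), 2^k * u m k * u n k = s (m+n) := by
  intro n
  induction n with
  | zero =>
    intro m
    rw [show m+0+2 = (m+1)+1 by omega, sum_range_succ']
    simp [u0 s h0 hrec m]
  | succ n ih =>
    intro m
    rw [show m+(n+1)+2 = (m+n+2)+1 by omega, sum_range_succ,
      u_eq_zero m (m+n+2) (by omega)]
    rw [← sym m n]
    have ihm := ih (m+1)
    rw [show (m+1)+n+2 = (m+n+2)+1 by omega, sum_range_succ,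
      u_eq_zero (m+1) (m+n+2) (by omega)] at ihm
    have : m + 1 + n = m + (n+1) := by omega
    rw [this] at ihm
    simpa using ihm

lemma gsum (K m n : ℕ) (h : m < K) :
    ∑ k ∈ range K, 2^k * u m k * u n k = s (m+n) := by
  have ext : ∀ K', m < K' → ∑ k ∈ range K', 2^k * u m k * u n k
      = ∑ k ∈ range (m+1), 2^k * u m k * u n k := by
    intro K' hK'
    refine (Finset.sum_subset ?_ ?_).symm
    · exact Finset.range_subset_range.2 (by omega)
    · intro k hk hk'
      rw [mem_range] at hk
      rw [u_eq_zero m k (by simpa using hk')]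
      ring
  rw [ext K h, ← ext (m+n+2) (by omega), gval s h0 hrec]

lemma main :
    ∀ m : ℕ, (Matrix.of fun i j : Fin m => s (i + j + 2)).det
      = 2 ^ (m + 1).choose 2 * (2 ^ (m + 1) - 1) := by
  have hgsum : ∀ K m n : ℕ, m < K →
      ∑ k ∈ range K, 2^k * u m k * u n k = s (m+n) := fun K m n h =>
    gsum s h0 hrec K m n h
  intro m
  induction m with
  | zero => simp [Matrix.det_fin_zero, Nat.choose]
  | succ m ih =>
    set A : Matrix (Fin (m+1)) (Fin (m+1)) ℤ :=
      Matrix.of (fun i j : Fin (m+1) =>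
        ∑ k ∈ range (m+1), 2^k * u ((i:ℕ)+1) k * u ((j:ℕ)+1) k) with hA
    have hlast : ∀ i : Fin (m+1), u ((i:ℕ)+1) (m+1) = if i = Fin.last m then 1 else 0 := by
      intro i
      by_cases hi : i = Fin.last m
      · rw [if_pos hi, hi]
        simp [Fin.val_last]
      · rw [if_neg hi]
        have : (i:ℕ) < m := by
          have := Fin.lt_last_iff_ne_last.2 hi
          exact Fin.lt_def.1 this
        exact u_eq_zero _ _ (by omega)
    have hentry : ∀ i j : Fin (m+1), s ((i:ℕ) + (j:ℕ) + 2)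
        = A i j + 2^(m+1) * (if i = Fin.last m then 1 else 0)
            * (if j = Fin.last m then 1 else 0) := by
      intro i j
      have h1 := hgsum (m+2) ((i:ℕ)+1) ((j:ℕ)+1) (by omega)
      rw [show (i:ℕ)+1+((j:ℕ)+1) = (i:ℕ)+(j:ℕ)+2 by omega] at h1
      rw [← h1, show m+2 = (m+1)+1 from rfl, sum_range_succ, hlast i, hlast j]
      simp only [hA, Matrix.of_apply]
    have hM : (Matrix.of fun i j : Fin (m+1) => s (i + j + 2))
        = A.updateRow (Fin.last m)
            (A (Fin.last m) + (2:ℤ)^(m+1) • Pi.single (Fin.last m) 1) := by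
      ext i j
      rw [Matrix.updateRow_apply]
      by_cases hi : i = Fin.last m
      · rw [if_pos hi]
        simp only [Matrix.of_apply, Pi.add_apply, Pi.smul_apply, smul_eq_mul]
        rw [hentry i j, hi]
        simp only [if_pos rfl, Pi.single_apply]
        by_cases hj : j = Fin.last m <;> simp [hj]
      · rw [if_neg hi]
        simp only [Matrix.of_apply]
        rw [hentry i j, if_neg hi]
        ring
    have hAfac : A = (Matrix.of fun i k : Fin (m+1) => u ((i:ℕ)+1) (k:ℕ))
        * Matrix.diagonal (fun k : Fin (m+1) => (2:ℤ)^(k:ℕ))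
        * (Matrix.of fun i k : Fin (m+1) => u ((i:ℕ)+1) (k:ℕ))ᵀ := by
      ext i j
      rw [Matrix.mul_apply]
      simp only [Matrix.mul_diagonal, Matrix.transpose_apply, Matrix.of_apply, hA]
      rw [← Fin.sum_univ_eq_sum_range (fun k => 2^k * u ((i:ℕ)+1) k * u ((j:ℕ)+1) k) (m+1)]
      exact Finset.sum_congr rfl fun k _ => by ring
    have hsumid : ∑ k : Fin (m+1), (k:ℕ) = (m+1).choose 2 := by
      rw [Fin.sum_univ_eq_sum_range (fun k => k) (m+1)]
      have h2 := Finset.sum_range_id_mul_two (m+1)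
      have h3 := Nat.choose_two_right (m+1)
      omega
    have hdetA : A.det = 2^(m+1) * 2^((m+1).choose 2) * 2^(m+1) := by
      rw [hAfac, Matrix.det_mul, Matrix.det_mul, Matrix.det_transpose, detW,
        Matrix.det_diagonal, Finset.prod_pow_eq_pow_sum, hsumid]
    have hcof : (A.updateRow (Fin.last m) (Pi.single (Fin.last m) 1)).det
        = (A.submatrix Fin.castSucc Fin.castSucc).det := by
      rw [Matrix.det_succ_row _ (Fin.last m)]
      rw [Finset.sum_eq_single (Fin.last m)]
      · rw [Matrix.updateRow_self, Pi.single_eq_same]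
        have heven : Even ((Fin.last m : ℕ) + (Fin.last m : ℕ)) := ⟨m, by simp [Fin.val_last]⟩
        rw [heven.neg_one_pow]
        have hsub : (A.updateRow (Fin.last m) (Pi.single (Fin.last m) 1)).submatrix
            (Fin.last m).succAbove (Fin.last m).succAbove
            = A.submatrix Fin.castSucc Fin.castSucc := by
          rw [Fin.succAbove_last]
          ext i j
          simp only [Matrix.submatrix_apply]
          exact congrFun (Matrix.updateRow_ne (M := A)
            (b := Pi.single (Fin.last m) 1) (Fin.castSucc_lt_last i).ne) j.castSucc
        rw [hsub]
        ring
      · intro j _ hj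
        rw [Matrix.updateRow_self, Pi.single_eq_of_ne hj]
        ring
      · intro h
        exact absurd (Finset.mem_univ _) h
    have hsubA : A.submatrix Fin.castSucc Fin.castSucc
        = (Matrix.of fun i j : Fin m => s (i + j + 2)) := by
      ext i j
      simp only [Matrix.submatrix_apply, Matrix.of_apply, hA, Fin.coe_castSucc]
      have h1 := hgsum (m+1) ((i:ℕ)+1) ((j:ℕ)+1) (by omega)
      rw [show (i:ℕ)+1+((j:ℕ)+1) = (i:ℕ)+(j:ℕ)+2 by omega] at h1
      exact h1
    rw [hM, Matrix.det_updateRow_add, Matrix.updateRow_eq_self,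
      Matrix.det_updateRow_smul, hcof, hsubA, ih, hdetA]
    have hch : (m+1+1).choose 2 = (m+1).choose 2 + (m+1) := by
      have h := Nat.choose_succ_succ (m+1) 1
      norm_num at h
      omega
    rw [hch]
    rw [pow_add, pow_add, pow_succ]
    ring

end

end Sch14

theorem stmt_14 (s : ℕ → ℤ) (h0 : s 0 = 1)
    (hrec : ∀ n : ℕ, 1 ≤ n →
      s n = s (n - 1) + ∑ k ∈ Finset.range n, s (n - 1 - k) * s k)
    (n : ℕ) (hn : 1 ≤ n) :
    Matrix.det (Matrix.of fun i j : Fin n => s (i + j + 2)) =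
      2 ^ (n + 1).choose 2 * (2 ^ (n + 1) - 1) := by
  exact Sch14.main s h0 hrec n
end

section
/- Define the Delannoy numbers by $D(a,0)=D(0,b)=1$ and $D(a,b)=D(a-1,b)+D(a-1,b-1)+D(a,b-1)$ for $a,b\ge 1$. Then for every positive integer $n$, $\det\left(D(i+j,i+j)\right)_{0\le i,j\le n-1}=2^{\binom{n+1}{2}-1}$. -/
def delBB : ℕ → ℤ := fun k => if k = 1 then 4 else 2

def delA : ℕ → ℕ → ℤ
  | 0, 0 => 1
  | 0, _+1 => 0
  | 1, 0 => -3
  | 1, 1 => 1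
  | 1, _+2 => 0
  | (k+2), 0 => -3 * delA (k+1) 0 - delBB (k+1) * delA k 0
  | (k+2), (j+1) => delA (k+1) j - 3 * delA (k+1) (j+1) - delBB (k+1) * delA k (j+1)

lemma delA_zero : ∀ k j, k < j → delA k j = 0 := by
  intro k
  induction k using Nat.strong_induction_on with
  | _ k ih =>
    intro j hj
    match k, j with
    | 0, (j+1) => rfl
    | 1, (j+2) => rfl
    | (k+2), (j+1) =>
      rw [delA]
      rw [ih (k+1) (by omega) j (by omega), ih (k+1) (by omega) (j+1) (by omega),
        ih k (by omega) (j+1) (by omega)]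
      ring

def delU (D : ℕ → ℕ → ℤ) (k x y : ℕ) : ℤ :=
  ∑ j ∈ Finset.range (k+1), delA k j * D (x+j) (y+j)

lemma delU_step (D : ℕ → ℕ → ℤ) (k x y : ℕ) :
    delU D (k+2) x y = delU D (k+1) (x+1) (y+1) - 3 * delU D (k+1) x y
      - delBB (k+1) * delU D k x y := by
  unfold delU
  rw [Finset.sum_range_succ' (fun j => delA (k+2) j * D (x+j) (y+j)) (k+2)]
  have e1 : ∀ j, delA (k+2) (j+1) * D (x+(j+1)) (y+(j+1))
      = delA (k+1) j * D ((x+1)+j) ((y+1)+j)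
        - 3 * (delA (k+1) (j+1) * D (x+(j+1)) (y+(j+1)))
        - delBB (k+1) * (delA k (j+1) * D (x+(j+1)) (y+(j+1))) := by
    intro j
    rw [delA, show (x+1)+j = x+(j+1) by omega, show (y+1)+j = y+(j+1) by omega]
    ring
  rw [Finset.sum_congr rfl (fun j _ => e1 j)]
  rw [Finset.sum_sub_distrib, Finset.sum_sub_distrib, ← Finset.mul_sum, ← Finset.mul_sum]
  -- B sum
  have hB : ∑ j ∈ Finset.range (k+2), delA (k+1) (j+1) * D (x+(j+1)) (y+(j+1))
      = (∑ j ∈ Finset.range (k+2), delA (k+1) j * D (x+j) (y+j)) - delA (k+1) 0 * D (x+0) (y+0) := by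
    rw [Finset.sum_range_succ' (fun j => delA (k+1) j * D (x+j) (y+j)) (k+1),
      Finset.sum_range_succ (fun j => delA (k+1) (j+1) * D (x+(j+1)) (y+(j+1))) (k+1),
      delA_zero (k+1) (k+2) (by omega)]
    ring
  have hC : ∑ j ∈ Finset.range (k+2), delA k (j+1) * D (x+(j+1)) (y+(j+1))
      = (∑ j ∈ Finset.range (k+1), delA k j * D (x+j) (y+j)) - delA k 0 * D (x+0) (y+0) := by
    rw [Finset.sum_range_succ (fun j => delA k (j+1) * D (x+(j+1)) (y+(j+1))) (k+1),
      Finset.sum_range_succ (fun j => delA k (j+1) * D (x+(j+1)) (y+(j+1))) k,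
      delA_zero k (k+2) (by omega), delA_zero k (k+1) (by omega),
      Finset.sum_range_succ' (fun j => delA k j * D (x+j) (y+j)) k]
    ring
  rw [hB, hC, delA]
  ring

section
variable (D : ℕ → ℕ → ℤ) (hD0 : ∀ a : ℕ, D a 0 = 1) (h0D : ∀ b : ℕ, D 0 b = 1)
    (hrec : ∀ a b : ℕ, D (a + 1) (b + 1) = D a (b + 1) + D a b + D (a + 1) b)

include hD0 h0D hrec

lemma D_symm : ∀ x y, D x y = D y x := by
  intro x
  induction x with
  | zero => intro y; cases y with
    | zero => rfl
    | succ y => rw [h0D, hD0]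
  | succ x ihx =>
    intro y
    induction y with
    | zero => rw [h0D, hD0]
    | succ y ihy =>
      rw [hrec, hrec, ihx (y+1), ihx y, ihy]
      ring

lemma D_one : ∀ m, D 1 m = 2 * (m : ℤ) + 1 := by
  intro m
  induction m with
  | zero => simpa using hD0 1
  | succ m ih =>
    have := hrec 0 m
    rw [h0D, h0D] at this
    rw [this, ih]
    push_cast
    ring

omit hD0 h0D in
lemma delU_rec (k x y : ℕ) :
    delU D k (x+1) (y+1) = delU D k x (y+1) + delU D k x y + delU D k (x+1) y := by
  unfold delU
  rw [← Finset.sum_add_distrib, ← Finset.sum_add_distrib]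
  refine Finset.sum_congr rfl (fun j _ => ?_)
  rw [show x+1+j = (x+j)+1 by omega, show y+1+j = (y+j)+1 by omega, hrec (x+j) (y+j)]
  ring

lemma delU_symm (k x y : ℕ) : delU D k x y = delU D k y x := by
  unfold delU
  exact Finset.sum_congr rfl (fun j _ => by rw [D_symm D hD0 h0D hrec])

lemma delU_row0 (b : ℕ) : delU D 0 0 b = 2^0 * (b.choose 0 : ℤ) := by
  simp [delU, delA, h0D]

lemma delU_row1 (b : ℕ) : delU D 1 0 b = 2^1 * (b.choose 1 : ℤ) := by
  unfold delU
  rw [Finset.sum_range_succ, Finset.sum_range_one]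
  show delA 1 0 * D 0 b + delA 1 1 * D 1 (b+1) = _
  rw [delA, delA, h0D, D_one D hD0 h0D hrec, Nat.choose_one_right]
  push_cast
  ring
end

section
variable (D : ℕ → ℕ → ℤ) (hD0 : ∀ a : ℕ, D a 0 = 1) (h0D : ∀ b : ℕ, D 0 b = 1)
    (hrec : ∀ a b : ℕ, D (a + 1) (b + 1) = D a (b + 1) + D a b + D (a + 1) b)

include hD0 h0D hrec

lemma delU_one (k : ℕ) (hk : ∀ b, delU D k 0 b = 2^k * (b.choose k : ℤ)) :
    ∀ b, delU D k 1 b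
      = 2^k * (((b+1).choose (k+1) : ℤ) + (b.choose (k+1) : ℤ)) + (if k = 1 then 2 else 0) := by
  intro b
  induction b with
  | zero =>
    rw [delU_symm D hD0 h0D hrec, hk 1]
    match k with
    | 0 => norm_num
    | 1 => norm_num
    | (k+2) =>
      rw [Nat.choose_eq_zero_of_lt (by omega), Nat.choose_eq_zero_of_lt (by omega),
        Nat.choose_eq_zero_of_lt (by omega), if_neg (by omega)]
      norm_num
  | succ b ih =>
    have h := delU_rec D hrec k 0 b
    rw [hk (b+1), hk b, ih] at h
    rw [h]
    have p1 : (((b+2).choose (k+1) : ℕ) : ℤ) = ((b+1).choose k : ℤ) + ((b+1).choose (k+1) : ℤ) := by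
      exact_mod_cast Nat.choose_succ_succ (b+1) k
    have p2 : (((b+1).choose (k+1) : ℕ) : ℤ) = (b.choose k : ℤ) + (b.choose (k+1) : ℤ) := by
      exact_mod_cast Nat.choose_succ_succ b k
    have p3 : (((b+1).choose k : ℕ) : ℤ) = ((b+1).choose k : ℤ) := rfl
    rw [show b+1+1 = b+2 by omega, p1, p2]
    ring

lemma delU_row : ∀ k b, delU D k 0 b = 2^k * (b.choose k : ℤ) := by
  suffices H : ∀ k, (∀ b, delU D k 0 b = 2^k * (b.choose k : ℤ))
      ∧ (∀ b, delU D (k+1) 0 b = 2^(k+1) * (b.choose (k+1) : ℤ)) by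
    exact fun k => (H k).1
  intro k
  induction k with
  | zero => exact ⟨delU_row0 D hD0 h0D hrec, delU_row1 D hD0 h0D hrec⟩
  | succ k ih =>
    refine ⟨ih.2, fun b => ?_⟩
    rw [delU_step D k 0 b, delU_one D hD0 h0D hrec (k+1) ih.2 (b+1), ih.2 b, ih.1 b]
    have p1 : (((b+2).choose (k+2) : ℕ) : ℤ) = ((b+1).choose (k+1) : ℤ) + ((b+1).choose (k+2) : ℤ) := by
      exact_mod_cast Nat.choose_succ_succ (b+1) (k+1)
    have p2 : (((b+1).choose (k+2) : ℕ) : ℤ) = (b.choose (k+1) : ℤ) + (b.choose (k+2) : ℤ) := by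
      exact_mod_cast Nat.choose_succ_succ b (k+1)
    have p3 : (((b+1).choose (k+1) : ℕ) : ℤ) = (b.choose k : ℤ) + (b.choose (k+1) : ℤ) := by
      exact_mod_cast Nat.choose_succ_succ b k
    rw [show b+1+1 = b+2 by omega, p1, p2, p3]
    unfold delBB
    match k with
    | 0 => norm_num; ring
    | (k+1) =>
      rw [if_neg (by omega), if_neg (by omega)]
      ring
end

section
variable (D : ℕ → ℕ → ℤ) (hD0 : ∀ a : ℕ, D a 0 = 1) (h0D : ∀ b : ℕ, D 0 b = 1)
    (hrec : ∀ a b : ℕ, D (a + 1) (b + 1) = D a (b + 1) + D a b + D (a + 1) b)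

include hD0 h0D hrec

lemma delU_sq (k : ℕ) : ∀ s x y, x + y = s → x < k → y < k → delU D k x y = 0 := by
  intro s
  induction s using Nat.strong_induction_on with
  | _ s ih =>
    intro x y hs hx hy
    match x, y with
    | 0, y =>
      rw [delU_row D hD0 h0D hrec k y, Nat.choose_eq_zero_of_lt hy]
      ring
    | (x+1), 0 =>
      rw [delU_symm D hD0 h0D hrec, delU_row D hD0 h0D hrec k (x+1),
        Nat.choose_eq_zero_of_lt hx]
      ring
    | (x+1), (y+1) =>
      rw [delU_rec D hrec k x y,
        ih (x+(y+1)) (by omega) x (y+1) rfl (by omega) (by omega),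
        ih (x+y) (by omega) x y rfl (by omega) (by omega),
        ih ((x+1)+y) (by omega) (x+1) y rfl (by omega) (by omega)]
      ring

lemma delU_col (k : ℕ) : ∀ x, x < k+1 → delU D (k+1) x (k+1) = 2^(k+1) := by
  intro x
  induction x with
  | zero =>
    intro _
    rw [delU_row D hD0 h0D hrec (k+1) (k+1), Nat.choose_self]
    ring
  | succ x ihx =>
    intro hx
    rw [show k+1 = k+1 by rfl] at *
    have h := delU_rec D hrec (k+1) x k
    rw [delU_sq D hD0 h0D hrec (k+1) (x+k) x k rfl (by omega) (by omega),
      delU_sq D hD0 h0D hrec (k+1) (x+1+k) (x+1) k rfl (by omega) (by omega),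
      ihx (by omega)] at h
    rw [h]
    ring

lemma delU_diag_top (k : ℕ) : delU D (k+1) (k+1) (k+1) = 2^(k+2) := by
  have h := delU_rec D hrec (k+1) k k
  rw [delU_sq D hD0 h0D hrec (k+1) (k+k) k k rfl (by omega) (by omega),
    delU_col D hD0 h0D hrec k k (by omega),
    delU_symm D hD0 h0D hrec (k+1) (k+1) k,
    delU_col D hD0 h0D hrec k k (by omega)] at h
  rw [h]
  ring

end

lemma delA_diag : ∀ k, delA k k = 1 := by
  intro k
  induction k using Nat.strong_induction_on with
  | _ k ih =>
    match k with
    | 0 => rfl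
    | 1 => rfl
    | (k+2) =>
      rw [delA, ih (k+1) (by omega), delA_zero (k+1) (k+2) (by omega),
        delA_zero k (k+2) (by omega)]
      ring

theorem stmt_16 (D : ℕ → ℕ → ℤ) (hD0 : ∀ a : ℕ, D a 0 = 1) (h0D : ∀ b : ℕ, D 0 b = 1)
    (hrec : ∀ a b : ℕ, D (a + 1) (b + 1) = D a (b + 1) + D a b + D (a + 1) b)
    (n : ℕ) (hn : 1 ≤ n) :
    Matrix.det (Matrix.of fun i j : Fin n => D (i + j) (i + j)) =
      2 ^ ((n + 1).choose 2 - 1) := by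
  set M : Matrix (Fin n) (Fin n) ℤ := Matrix.of fun i j : Fin n => D (i + j) (i + j) with hM
  set L : Matrix (Fin n) (Fin n) ℤ := Matrix.of fun i j : Fin n => delA i j with hL
  -- entries of L * M * Lᵀ
  have hN : ∀ k l : Fin n, (L * M * L.transpose) k l
      = ∑ i ∈ Finset.range n, delA k i * delU D l i i := by
    intro k l
    rw [Matrix.mul_apply]
    have : ∀ j : Fin n, (L * M) k j * L.transpose j l
        = ∑ i : Fin n, delA (k:ℕ) (i:ℕ) * (D ((i:ℕ)+(j:ℕ)) ((i:ℕ)+(j:ℕ)) * delA (l:ℕ) (j:ℕ)) := by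
      intro j
      rw [Matrix.mul_apply, Finset.sum_mul]
      exact Finset.sum_congr rfl (fun i _ => by
        simp only [hL, hM, Matrix.transpose_apply, Matrix.of_apply]
        ring)
    rw [Finset.sum_congr rfl (fun j _ => this j), Finset.sum_comm]
    rw [Fin.sum_univ_eq_sum_range
      (fun i => ∑ j : Fin n, delA (k:ℕ) i * (D (i+(j:ℕ)) (i+(j:ℕ)) * delA (l:ℕ) (j:ℕ))) n]
    refine Finset.sum_congr rfl (fun i _ => ?_)
    rw [← Finset.mul_sum]
    congr 1
    rw [Fin.sum_univ_eq_sum_range (fun j => D (i+j) (i+j) * delA (l:ℕ) j) n]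
    unfold delU
    rw [Finset.sum_subset (Finset.range_subset_range.mpr (by omega : (l:ℕ)+1 ≤ n))]
    · exact Finset.sum_congr rfl (fun j _ => by ring)
    · intro j _ hj
      rw [delA_zero (l:ℕ) j (by simp [Finset.mem_range] at hj ⊢; omega)]
      ring
  -- triangularity of N
  have htri : ∀ k l : Fin n, (k:ℕ) < (l:ℕ) → (L * M * L.transpose) k l = 0 := by
    intro k l hkl
    rw [hN k l]
    refine Finset.sum_eq_zero (fun i _ => ?_)
    by_cases hi : i < (l:ℕ)
    · rw [delU_sq D hD0 h0D hrec (l:ℕ) (i+i) i i rfl hi hi]; ring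
    · rw [delA_zero (k:ℕ) i (by omega)]; ring
  -- diagonal of N
  have hdiag : ∀ k : Fin n, (L * M * L.transpose) k k = delU D k k k := by
    intro k
    rw [hN k k]
    rw [Finset.sum_eq_single_of_mem (k:ℕ) (Finset.mem_range.mpr k.isLt)]
    · rw [delA_diag]; ring
    · intro i _ hik
      rcases lt_or_gt_of_ne hik with h | h
      · rw [delU_sq D hD0 h0D hrec (k:ℕ) (i+i) i i rfl h h]; ring
      · rw [delA_zero (k:ℕ) i h]; ring
  -- determinants
  have hdetL : L.det = 1 := by
    rw [Matrix.det_of_lowerTriangular L (by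
      intro i j hij
      exact delA_zero (i:ℕ) (j:ℕ) hij)]
    exact Finset.prod_eq_one (fun i _ => delA_diag i)
  have hdetN : (L * M * L.transpose).det = ∏ k : Fin n, delU D (k:ℕ) k k := by
    rw [Matrix.det_of_lowerTriangular _ (by
      intro i j hij
      exact htri i j hij)]
    exact Finset.prod_congr rfl (fun k _ => hdiag k)
  have hMdet : M.det = ∏ k : Fin n, delU D (k:ℕ) k k := by
    rw [← hdetN, Matrix.det_mul, Matrix.det_mul, Matrix.det_transpose, hdetL]
    ring
  rw [hM] at hMdet
  rw [hMdet]
  -- compute the product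
  obtain ⟨m, rfl⟩ : ∃ m, n = m + 1 := ⟨n - 1, by omega⟩
  rw [Fin.prod_univ_eq_prod_range (fun k => delU D k k k) (m+1)]
  rw [Finset.prod_range_succ' (fun k => delU D k k k) m]
  have h0 : delU D 0 0 0 = 1 := by
    simp [delU, delA, hD0 0]
  have hsucc : ∀ k, delU D (k+1) (k+1) (k+1) = 2^(k+2) :=
    fun k => delU_diag_top D hD0 h0D hrec k
  rw [h0, Finset.prod_congr rfl (fun k _ => hsucc k), mul_one]
  rw [Finset.prod_pow_eq_pow_sum]
  congr 1
  have h1 : (∑ i ∈ Finset.range m, i) * 2 = m * (m - 1) := Finset.sum_range_id_mul_two m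
  have h2 : (m + 1 + 1).choose 2 = (m + 2) * (m + 1) / 2 := by
    rw [Nat.choose_two_right]
    rfl
  have h4 : (m + 2) * (m + 1) = m * (m - 1) + 4 * m + 2 := by
    cases m with
    | zero => rfl
    | succ m => simp only [Nat.add_sub_cancel]; ring
  have h3 : ∑ k ∈ Finset.range m, (k + 2) = (∑ i ∈ Finset.range m, i) + 2 * m := by
    rw [Finset.sum_add_distrib, Finset.sum_const, Finset.card_range, smul_eq_mul]
    omega
  omega
end

section
/- Define the Delannoy numbers by $D(a,0)=D(0,b)=1$ and $D(a,b)=D(a-1,b)+D(a-1,b-1)+D(a,b-1)$ for $a,b\ge 1$. Then for every positive integer $n$, $\det\left(D(i+j+1,i+j+1)\right)_{0\le i,j\le n-1}=2^{\binom{n+2}{2}-2}+2^{\binom{n+1}{2}-1}$. -/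
open Finset Matrix

private def hw (k : ℕ) : ℤ := if k = 0 then 1 else 2 ^ (k + 1)

private def Gt (m k i : ℕ) : ℤ := 2 ^ i * (m.choose i : ℤ) * (m.choose (i + k) : ℤ)

private def Qf (m k : ℕ) : ℤ := ∑ i ∈ Finset.range (m + 1), Gt m k i

private lemma Gt_zero {m k i : ℕ} (h : m < i + k) : Gt m k i = 0 := by
  unfold Gt; rw [Nat.choose_eq_zero_of_lt h]; push_cast; ring

private lemma Qf_eq_zero {m k : ℕ} (h : m < k) : Qf m k = 0 :=
  Finset.sum_eq_zero fun i _ => Gt_zero (by omega)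

private lemma Qf_diag (m : ℕ) : Qf m m = 1 := by
  unfold Qf
  rw [Finset.sum_eq_single 0]
  · simp [Gt]
  · intro i _ hne; exact Gt_zero (by omega)
  · intro h; simp at h

private lemma Qf_shift (m k : ℕ) :
    ∑ i ∈ Finset.range (m + 1), Gt m k (i + 1) = Qf m k - Gt m k 0 := by
  have h1 := Finset.sum_range_succ' (Gt m k) (m + 1)
  have h2 : ∑ i ∈ Finset.range (m + 2), Gt m k i = Qf m k := by
    rw [Finset.sum_range_succ, Gt_zero (show m < m + 1 + k by omega)]
    unfold Qf; ring
  linarith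

private lemma Qf_rec_succ (m k : ℕ) :
    Qf (m + 1) (k + 1) = Qf m k + 3 * Qf m (k + 1) + 2 * Qf m (k + 2) := by
  have point : ∀ i, Gt (m + 1) (k + 1) (i + 1)
      = 2 * Gt m (k + 1) i + 2 * Gt m (k + 2) i + Gt m (k + 1) (i + 1) + Gt m k (i + 1) := by
    intro i
    unfold Gt
    rw [show i + 1 + (k + 1) = (i + k + 1) + 1 by ring, Nat.choose_succ_succ m i,
      Nat.choose_succ_succ m (i + k + 1),
      show i + (k + 1) = i + k + 1 by ring, show i + (k + 2) = i + k + 1 + 1 by ring,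
      show i + 1 + k = i + k + 1 by ring]
    simp only [Nat.succ_eq_add_one]
    push_cast; ring
  have main : Qf (m + 1) (k + 1)
      = ∑ i ∈ Finset.range (m + 1), Gt (m + 1) (k + 1) (i + 1) + Gt (m + 1) (k + 1) 0 := by
    unfold Qf; exact Finset.sum_range_succ' _ (m + 1)
  rw [main]
  simp only [point]
  rw [Finset.sum_add_distrib, Finset.sum_add_distrib, Finset.sum_add_distrib,
    ← Finset.mul_sum, ← Finset.mul_sum, Qf_shift m (k + 1), Qf_shift m k]
  have h0 : Gt (m + 1) (k + 1) 0 = ((m + 1).choose (k + 1) : ℤ) := by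
    unfold Gt; simp
  have h1 : Gt m (k + 1) 0 = (m.choose (k + 1) : ℤ) := by unfold Gt; simp
  have h2 : Gt m k 0 = (m.choose k : ℤ) := by unfold Gt; simp
  rw [h0, h1, h2, Nat.choose_succ_succ m k]
  unfold Qf
  push_cast; ring

private lemma Qf_rec_zero (m : ℕ) : Qf (m + 1) 0 = 3 * Qf m 0 + 4 * Qf m 1 := by
  have point : ∀ i, Gt (m + 1) 0 (i + 1)
      = 2 * Gt m 0 i + 4 * Gt m 1 i + Gt m 0 (i + 1) := by
    intro i
    unfold Gt
    rw [show i + 1 + 0 = i + 1 by ring, Nat.choose_succ_succ m i,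
      show i + 0 = i by ring]
    push_cast; ring
  have main : Qf (m + 1) 0
      = ∑ i ∈ Finset.range (m + 1), Gt (m + 1) 0 (i + 1) + Gt (m + 1) 0 0 := by
    unfold Qf; exact Finset.sum_range_succ' _ (m + 1)
  rw [main]
  simp only [point]
  rw [Finset.sum_add_distrib, Finset.sum_add_distrib, ← Finset.mul_sum, ← Finset.mul_sum,
    Qf_shift m 0]
  have h0 : Gt (m + 1) 0 0 = 1 := by unfold Gt; simp
  have h2 : Gt m 0 0 = 1 := by unfold Gt; simp
  rw [h0, h2]
  unfold Qf
  push_cast; ring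

/-! ### Part 2: closed form for Delannoy numbers -/

private def Pt (a b k : ℕ) : ℤ := 2 ^ k * (a.choose k : ℤ) * (b.choose k : ℤ)

private def Pf (a b : ℕ) : ℤ := ∑ k ∈ Finset.range (a + 1), Pt a b k

private lemma Pt_zero {a b k : ℕ} (h : a < k) : Pt a b k = 0 := by
  unfold Pt; rw [Nat.choose_eq_zero_of_lt h]; push_cast; ring

private lemma Pf_shift (a b : ℕ) :
    ∑ k ∈ Finset.range (a + 1), Pt a b (k + 1) = Pf a b - Pt a b 0 := by
  have h1 := Finset.sum_range_succ' (Pt a b) (a + 1)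
  have h2 : ∑ k ∈ Finset.range (a + 2), Pt a b k = Pf a b := by
    rw [Finset.sum_range_succ, Pt_zero (show a < a + 1 by omega)]
    unfold Pf; ring
  linarith

private def Xt (a b k : ℕ) : ℤ := 2 ^ k * (a.choose k : ℤ) * (b.choose (k + 1) : ℤ)
private def Yt (a b k : ℕ) : ℤ := 2 ^ (k + 1) * (a.choose (k + 1) : ℤ) * (b.choose k : ℤ)

private lemma Pf_rec (a b : ℕ) :
    Pf (a + 1) (b + 1) = Pf a (b + 1) + Pf a b + Pf (a + 1) b := by
  have pL : ∀ k, Pt (a + 1) (b + 1) (k + 1)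
      = 2 * Pt a b k + 2 * Xt a b k + Yt a b k + Pt a b (k + 1) := by
    intro k
    unfold Pt Xt Yt
    rw [Nat.choose_succ_succ a k, Nat.choose_succ_succ b k]
    push_cast; ring
  have pR1 : ∀ k, Pt a (b + 1) (k + 1) = Yt a b k + Pt a b (k + 1) := by
    intro k
    unfold Pt Yt
    rw [Nat.choose_succ_succ b k]
    push_cast; ring
  have pR2 : ∀ k, Pt (a + 1) b (k + 1) = 2 * Xt a b k + Pt a b (k + 1) := by
    intro k
    unfold Pt Xt
    rw [Nat.choose_succ_succ a k]
    push_cast; ring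
  have L : Pf (a + 1) (b + 1)
      = ∑ k ∈ Finset.range (a + 1), Pt (a + 1) (b + 1) (k + 1) + Pt (a + 1) (b + 1) 0 := by
    unfold Pf
    rw [Finset.sum_range_succ' (Pt (a + 1) (b + 1)) (a + 1)]
  have R1 : Pf a (b + 1)
      = ∑ k ∈ Finset.range (a + 1), Pt a (b + 1) (k + 1) + Pt a (b + 1) 0 := by
    unfold Pf
    rw [Finset.sum_range_succ (fun k => Pt a (b + 1) (k + 1)) a,
      Pt_zero (show a < a + 1 by omega), Finset.sum_range_succ' (Pt a (b + 1)) a]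
    ring
  have R2 : Pf (a + 1) b
      = ∑ k ∈ Finset.range (a + 1), Pt (a + 1) b (k + 1) + Pt (a + 1) b 0 := by
    unfold Pf
    rw [Finset.sum_range_succ' (Pt (a + 1) b) (a + 1)]
  rw [L, R1, R2]
  simp only [pL, pR1, pR2]
  rw [Finset.sum_add_distrib, Finset.sum_add_distrib, Finset.sum_add_distrib,
    Finset.sum_add_distrib, Finset.sum_add_distrib]
  simp only [← Finset.mul_sum]
  rw [Pf_shift a b]
  have ePf : ∑ k ∈ Finset.range (a + 1), Pt a b k = Pf a b := rfl
  rw [ePf]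
  have e1 : Pt a b 0 = 1 := by unfold Pt; simp
  have e2 : Pt (a + 1) (b + 1) 0 = 1 := by unfold Pt; simp
  have e3 : Pt a (b + 1) 0 = 1 := by unfold Pt; simp
  have e4 : Pt (a + 1) b 0 = 1 := by unfold Pt; simp
  rw [e1, e2, e3, e4]
  ring

private lemma D_closed (D : ℕ → ℕ → ℤ) (hD0 : ∀ a : ℕ, D a 0 = 1) (h0D : ∀ b : ℕ, D 0 b = 1)
    (hrec : ∀ a b : ℕ, D (a + 1) (b + 1) = D a (b + 1) + D a b + D (a + 1) b) :
    ∀ a b, D a b = Pf a b := by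
  intro a
  induction a with
  | zero =>
    intro b
    rw [h0D]
    unfold Pf
    simp [Pt]
  | succ a ih =>
    intro b
    induction b with
    | zero =>
      rw [hD0]
      unfold Pf
      rw [Finset.sum_eq_single 0]
      · unfold Pt; simp
      · intro k _ hk
        unfold Pt
        rw [Nat.choose_eq_zero_of_lt (show 0 < k by omega)]
        push_cast; ring
      · intro h; simp at h
    | succ b ihb =>
      rw [hrec, ih (b + 1), ih b, ihb, Pf_rec]

private lemma Qf_eq_Pf (m : ℕ) : Qf m 0 = Pf m m := by
  unfold Qf Pf Gt Pt
  rfl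

/-! ### Part 3: the Gram-type lemma -/

private lemma hw_zero : hw 0 = 1 := rfl
private lemma hw_succ (k : ℕ) : hw (k + 1) = 2 ^ (k + 2) := by unfold hw; simp

private lemma claim (i j : ℕ) :
    ∑ k ∈ Finset.range (i + 2), hw k * Qf (i + 1) k * Qf j k
      = ∑ k ∈ Finset.range (i + 2), hw k * Qf i k * Qf (j + 1) k := by
  rw [Finset.sum_range_succ' (fun k => hw k * Qf (i + 1) k * Qf j k) (i + 1),
    Finset.sum_range_succ' (fun k => hw k * Qf i k * Qf (j + 1) k) (i + 1)]
  have pL : ∀ k, hw (k + 1) * Qf (i + 1) (k + 1) * Qf j (k + 1)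
      = 2 ^ (k + 2) * Qf i k * Qf j (k + 1) + 3 * (2 ^ (k + 2) * Qf i (k + 1) * Qf j (k + 1))
        + 2 * (2 ^ (k + 2) * Qf i (k + 2) * Qf j (k + 1)) := by
    intro k
    rw [hw_succ, Qf_rec_succ i k]
    ring
  have pR : ∀ k, hw (k + 1) * Qf i (k + 1) * Qf (j + 1) (k + 1)
      = 2 ^ (k + 2) * Qf i (k + 1) * Qf j k + 3 * (2 ^ (k + 2) * Qf i (k + 1) * Qf j (k + 1))
        + 2 * (2 ^ (k + 2) * Qf i (k + 1) * Qf j (k + 2)) := by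
    intro k
    rw [hw_succ, Qf_rec_succ j k]
    ring
  simp only [pL, pR]
  rw [Finset.sum_add_distrib, Finset.sum_add_distrib, Finset.sum_add_distrib,
    Finset.sum_add_distrib]
  simp only [← Finset.mul_sum]
  have SA0 : ∑ k ∈ Finset.range (i + 1), 2 ^ (k + 2) * Qf i k * Qf j (k + 1)
      = 4 * Qf i 0 * Qf j 1
        + 2 * ∑ k ∈ Finset.range (i + 1), 2 ^ (k + 2) * Qf i (k + 1) * Qf j (k + 2) := by
    rw [Finset.sum_range_succ' (fun k => (2:ℤ) ^ (k + 2) * Qf i k * Qf j (k + 1)) i,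
      Finset.sum_range_succ (fun k => (2:ℤ) ^ (k + 2) * Qf i (k + 1) * Qf j (k + 2)) i,
      Qf_eq_zero (show i < i + 1 by omega)]
    have hpt : ∀ k, (2:ℤ) ^ (k + 1 + 2) * Qf i (k + 1) * Qf j (k + 1 + 1)
        = 2 * (2 ^ (k + 2) * Qf i (k + 1) * Qf j (k + 2)) := by
      intro k
      rw [show k + 1 + 1 = k + 2 by omega]
      ring
    rw [Finset.sum_congr rfl (fun k _ => hpt k), ← Finset.mul_sum]
    simp only [zero_add]
    ring
  have SB0 : ∑ k ∈ Finset.range (i + 1), 2 ^ (k + 2) * Qf i (k + 1) * Qf j k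
      = 4 * Qf i 1 * Qf j 0
        + 2 * ∑ k ∈ Finset.range (i + 1), 2 ^ (k + 2) * Qf i (k + 2) * Qf j (k + 1) := by
    rw [Finset.sum_range_succ' (fun k => (2:ℤ) ^ (k + 2) * Qf i (k + 1) * Qf j k) i,
      Finset.sum_range_succ (fun k => (2:ℤ) ^ (k + 2) * Qf i (k + 2) * Qf j (k + 1)) i,
      Qf_eq_zero (show i < i + 2 by omega)]
    have hpt : ∀ k, (2:ℤ) ^ (k + 1 + 2) * Qf i (k + 1 + 1) * Qf j (k + 1)
        = 2 * (2 ^ (k + 2) * Qf i (k + 2) * Qf j (k + 1)) := by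
      intro k
      rw [show k + 1 + 1 = k + 2 by omega]
      ring
    rw [Finset.sum_congr rfl (fun k _ => hpt k), ← Finset.mul_sum]
    simp only [zero_add]
    ring
  rw [SA0, SB0, hw_zero, Qf_rec_zero i, Qf_rec_zero j]
  ring

private lemma Glem : ∀ i j : ℕ,
    ∑ k ∈ Finset.range (i + 1), hw k * Qf i k * Qf j k = Qf (i + j) 0 := by
  intro i
  induction i with
  | zero =>
    intro j
    simp [hw_zero, Qf_diag 0]
  | succ i ih =>
    intro j
    rw [show i + 1 + j = i + (j + 1) by omega, ← ih (j + 1)]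
    rw [claim i j]
    rw [Finset.sum_range_succ (fun k => hw k * Qf i k * Qf (j + 1) k) (i + 1),
      Qf_eq_zero (show i < i + 1 by omega)]
    ring

/-! ### Part 4: matrices -/

private def Tf (k l : ℕ) : ℤ :=
  if l = k then 3 * hw k else if l = k + 1 then hw (k + 1) else if k = l + 1 then hw k else 0

private def Tmat (n : ℕ) : Matrix (Fin n) (Fin n) ℤ :=
  Matrix.of fun k l : Fin n => Tf k l

private def Qmat (n : ℕ) : Matrix (Fin n) (Fin n) ℤ :=
  Matrix.of fun i k : Fin n => Qf i k

private lemma TQ_sum (n k j : ℕ) (hk : k < n) (hj : j < n) :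
    ∑ l ∈ Finset.range n, Tf k l * Qf j l = hw k * Qf (j + 1) k := by
  have point : ∀ l, Tf k l * Qf j l
      = (if l = k then 3 * hw k * Qf j l else 0)
        + (if l = k + 1 then hw (k + 1) * Qf j l else 0)
        + (if k = l + 1 then hw k * Qf j l else 0) := by
    intro l
    unfold Tf
    split_ifs <;>
      first
        | omega
        | ring
  rw [Finset.sum_congr rfl (fun l _ => point l)]
  rw [Finset.sum_add_distrib, Finset.sum_add_distrib]
  rw [Finset.sum_ite_eq' (Finset.range n) k (fun l => 3 * hw k * Qf j l),
    Finset.sum_ite_eq' (Finset.range n) (k + 1) (fun l => hw (k + 1) * Qf j l)]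
  rw [if_pos (Finset.mem_range.mpr hk)]
  have e2 : (if k + 1 ∈ Finset.range n then hw (k + 1) * Qf j (k + 1) else 0)
      = hw (k + 1) * Qf j (k + 1) := by
    split_ifs with h
    · rfl
    · rw [Qf_eq_zero (show j < k + 1 by simp [Finset.mem_range] at h; omega)]
      ring
  rw [e2]
  match k with
  | 0 =>
    have e3 : ∀ l, (0 = l + 1) = False := by intro l; simp
    simp only [e3, if_false, Finset.sum_const_zero]
    rw [hw_zero, hw_succ 0, Qf_rec_zero j]
    ring
  | (K + 1) =>
    have e3 : ∀ l : ℕ, (K + 1 = l + 1) = (l = K) := by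
      intro l
      simp only [eq_iff_iff]
      omega
    simp only [e3]
    rw [Finset.sum_ite_eq' (Finset.range n) K (fun l => hw (K + 1) * Qf j l),
      if_pos (Finset.mem_range.mpr (show K < n by omega))]
    rw [hw_succ K, hw_succ (K + 1), Qf_rec_succ j K]
    ring

private lemma prod_entry (n : ℕ) (i j : Fin n) :
    (Qmat n * (Tmat n * (Qmat n)ᵀ)) i j = Qf ((i : ℕ) + (j : ℕ) + 1) 0 := by
  rw [Matrix.mul_apply]
  have hinner : ∀ k : Fin n, (Tmat n * (Qmat n)ᵀ) k j = hw k * Qf ((j : ℕ) + 1) k := by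
    intro k
    rw [Matrix.mul_apply]
    have : ∀ l : Fin n, Tmat n k l * (Qmat n)ᵀ l j = Tf k l * Qf j l := fun l => rfl
    rw [Finset.sum_congr rfl (fun l _ => this l)]
    rw [Fin.sum_univ_eq_sum_range (fun l => Tf k l * Qf j l) n]
    exact TQ_sum n k j k.isLt j.isLt
  rw [Finset.sum_congr rfl (fun k _ => by rw [hinner k])]
  have : ∀ k : Fin n, Qmat n i k * (hw k * Qf ((j : ℕ) + 1) k)
      = hw k * Qf i k * Qf ((j : ℕ) + 1) k := by
    intro k; show Qf i k * _ = _; ring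
  rw [Finset.sum_congr rfl (fun k _ => this k)]
  rw [Fin.sum_univ_eq_sum_range (fun k => hw k * Qf i k * Qf ((j : ℕ) + 1) k) n]
  rw [← Finset.sum_subset (Finset.range_subset_range.mpr i.isLt)
    (fun k _ hk => by
      rw [Qf_eq_zero (show (i : ℕ) < k by simp [Finset.mem_range] at hk ⊢; omega)]
      ring)]
  rw [Glem i ((j : ℕ) + 1)]
  congr 1

private lemma det_Qmat (n : ℕ) : (Qmat n).det = 1 := by
  rw [Matrix.det_of_lowerTriangular (Qmat n)
    (fun i j hij => Qf_eq_zero (show (i : ℕ) < (j : ℕ) from hij))]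
  have : ∀ i : Fin n, Qmat n i i = 1 := fun i => Qf_diag i
  simp [this]

/-! ### Part 5: tridiagonal determinant -/

private def Hs : ℕ → ℤ
  | 0 => 1
  | 1 => 3
  | (n + 2) => 3 * hw (n + 1) * Hs (n + 1) - hw (n + 1) ^ 2 * Hs n

private lemma succAbove_val {N : ℕ} (p : Fin (N + 1)) (a : Fin N) :
    ((p.succAbove a : Fin (N + 1)) : ℕ) = if (a : ℕ) < (p : ℕ) then (a : ℕ) else (a : ℕ) + 1 := by
  rw [Fin.succAbove]
  split_ifs with h1 h2 h2 <;> simp_all [Fin.lt_def]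

private lemma Tmat_sub (n : ℕ) :
    (Tmat (n + 1)).submatrix Fin.castSucc Fin.castSucc = Tmat n := by
  ext p q
  rfl

private lemma det_Tmat : ∀ n, (Tmat n).det = Hs n := by
  intro n
  induction n using Nat.twoStepInduction with
  | zero => simp [Hs, Matrix.det_isEmpty]
  | one =>
    rw [show Hs 1 = 3 from rfl, Matrix.det_fin_one]
    show Tf 0 0 = 3
    unfold Tf
    simp [hw_zero]
  | more n ih1 ih2 =>
    set jn : Fin (n + 2) := ⟨n, by omega⟩ with hjn
    have hjnv : (jn : ℕ) = n := rfl
    rw [Matrix.det_succ_row (Tmat (n + 2)) (Fin.last (n + 1))]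
    have hzero : ∀ j ∈ (Finset.univ : Finset (Fin (n + 2))),
        j ∉ ({jn, Fin.last (n + 1)} : Finset (Fin (n + 2))) →
        (-1 : ℤ) ^ ((Fin.last (n + 1) : ℕ) + (j : ℕ)) * Tmat (n + 2) (Fin.last (n + 1)) j *
          ((Tmat (n + 2)).submatrix (Fin.last (n + 1)).succAbove j.succAbove).det = 0 := by
      intro j _ hj
      simp only [Finset.mem_insert, Finset.mem_singleton, not_or] at hj
      have hv1 : (j : ℕ) ≠ n := fun h => hj.1 (Fin.ext h)
      have hv2 : (j : ℕ) ≠ n + 1 := fun h => hj.2 (Fin.ext h)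
      have : Tmat (n + 2) (Fin.last (n + 1)) j = 0 := by
        show Tf (n + 1) (j : ℕ) = 0
        unfold Tf
        have hlt : (j : ℕ) < n + 2 := j.isLt
        rw [if_neg (by omega), if_neg (by omega), if_neg (by omega)]
      rw [this]
      ring
    rw [← Finset.sum_subset (Finset.subset_univ {jn, Fin.last (n + 1)}) hzero]
    rw [Finset.sum_pair (show jn ≠ Fin.last (n + 1) from
      Fin.ne_of_val_ne (show n ≠ n + 1 by omega))]
    -- second term : j = last
    have hterm2 : (-1 : ℤ) ^ ((Fin.last (n + 1) : ℕ) + ((Fin.last (n + 1)) : ℕ)) *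
        Tmat (n + 2) (Fin.last (n + 1)) (Fin.last (n + 1)) *
        ((Tmat (n + 2)).submatrix (Fin.last (n + 1)).succAbove
          (Fin.last (n + 1)).succAbove).det = 3 * hw (n + 1) * Hs (n + 1) := by
      rw [Fin.succAbove_last, Tmat_sub, ih2]
      have hsign : (-1 : ℤ) ^ ((Fin.last (n + 1) : ℕ) + ((Fin.last (n + 1)) : ℕ)) = 1 :=
        Even.neg_one_pow (by rw [Fin.val_last]; exact ⟨n + 1, by ring⟩)
      rw [hsign]
      have hent : Tmat (n + 2) (Fin.last (n + 1)) (Fin.last (n + 1)) = 3 * hw (n + 1) := by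
        show Tf (n + 1) (n + 1) = 3 * hw (n + 1)
        unfold Tf
        rw [if_pos rfl]
      rw [hent]
      ring
    -- first term : j = jn
    have hterm1 : (-1 : ℤ) ^ ((Fin.last (n + 1) : ℕ) + (jn : ℕ)) *
        Tmat (n + 2) (Fin.last (n + 1)) jn *
        ((Tmat (n + 2)).submatrix (Fin.last (n + 1)).succAbove jn.succAbove).det
        = - (hw (n + 1) ^ 2 * Hs n) := by
      have hsign : (-1 : ℤ) ^ ((Fin.last (n + 1) : ℕ) + (jn : ℕ)) = -1 := by
        have : (Fin.last (n + 1) : ℕ) + (jn : ℕ) = 2 * n + 1 := by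
          simp only [Fin.val_last, hjnv]
          omega
        rw [this]
        exact Odd.neg_one_pow ⟨n, by ring⟩
      have hent : Tmat (n + 2) (Fin.last (n + 1)) jn = hw (n + 1) := by
        show Tf (n + 1) n = hw (n + 1)
        unfold Tf
        rw [if_neg (by omega), if_neg (by omega), if_pos rfl]
      have hminor : ((Tmat (n + 2)).submatrix (Fin.last (n + 1)).succAbove jn.succAbove).det
          = hw (n + 1) * Hs n := by
        rw [Fin.succAbove_last]
        set M1 := (Tmat (n + 2)).submatrix Fin.castSucc jn.succAbove with hM1
        rw [Matrix.det_succ_column M1 (Fin.last n)]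
        rw [Finset.sum_eq_single (Fin.last n)]
        · have hcol : M1 (Fin.last n) (Fin.last n) = hw (n + 1) := by
            show Tf ((Fin.castSucc (Fin.last n) : Fin (n + 2)) : ℕ)
              ((jn.succAbove (Fin.last n) : Fin (n + 2)) : ℕ) = hw (n + 1)
            rw [succAbove_val]
            simp only [Fin.coe_castSucc, Fin.val_last, hjnv]
            rw [if_neg (by omega)]
            unfold Tf
            rw [if_neg (by omega), if_pos rfl]
          have hsub : (M1.submatrix (Fin.last n).succAbove (Fin.last n).succAbove).det
              = (Tmat n).det := by
            congr 1
            ext p q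
            show Tf _ _ = Tf (p : ℕ) (q : ℕ)
            congr 1
            · simp
            · have hin : ((Fin.last n).succAbove q : ℕ) = (q : ℕ) := by
                rw [succAbove_val, Fin.val_last, if_pos q.isLt]
              rw [succAbove_val, hin, hjnv, if_pos q.isLt]
          rw [hcol, hsub, ih1]
          have hsign2 : (-1 : ℤ) ^ (((Fin.last n) : ℕ) + ((Fin.last n) : ℕ)) = 1 :=
            Even.neg_one_pow ⟨n, by rw [Fin.val_last]⟩
          rw [hsign2]
          ring
        · intro p _ hp
          have hpv : (p : ℕ) < n := by
            have := p.isLt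
            have : (p : ℕ) ≠ n := fun h => hp (Fin.ext (by simp [Fin.val_last, h]))
            omega
          have : M1 p (Fin.last n) = 0 := by
            show Tf ((Fin.castSucc p : Fin (n + 2)) : ℕ)
              ((jn.succAbove (Fin.last n) : Fin (n + 2)) : ℕ) = 0
            rw [succAbove_val]
            simp only [Fin.coe_castSucc, Fin.val_last, hjnv]
            rw [if_neg (by omega)]
            unfold Tf
            rw [if_neg (by omega), if_neg (by omega), if_neg (by omega)]
          rw [this]
          ring
        · intro h
          exact absurd (Finset.mem_univ _) h
      rw [hsign, hent, hminor]
      ring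
    rw [hterm1, hterm2]
    show _ = 3 * hw (n + 1) * Hs (n + 1) - hw (n + 1) ^ 2 * Hs n
    ring

/-! ### Part 6: closed form for Hs and the main theorem -/

private lemma choose2_succ (m : ℕ) : (m + 2).choose 2 = (m + 1).choose 2 + (m + 1) := by
  rw [Nat.choose_succ_succ (m + 1) 1, Nat.choose_one_right]
  ring

private lemma choose2_pos (m : ℕ) : 1 ≤ (m + 2).choose 2 := Nat.choose_pos (by omega)

private lemma Hs_closed : ∀ n : ℕ,
    Hs (n + 1) = 2 ^ ((n + 2).choose 2 - 1) * (2 ^ (n + 1) + 1) := by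
  intro n
  induction n using Nat.twoStepInduction with
  | zero =>
    show Hs 1 = _
    rw [show Hs 1 = 3 from rfl]
    norm_num [Nat.choose]
  | one =>
    rw [show Hs 2 = 3 * hw 1 * Hs 1 - hw 1 ^ 2 * Hs 0 from rfl,
      show Hs 1 = 3 from rfl, show Hs 0 = 1 from rfl, hw_succ 0]
    norm_num [Nat.choose]
  | more n ih1 ih2 =>
    rw [show Hs (n + 2 + 1) = 3 * hw (n + 2) * Hs (n + 2) - hw (n + 2) ^ 2 * Hs (n + 1) from rfl,
      show n + 2 = n + 1 + 1 from rfl, ih2, show n + 1 + 1 = n + 2 from rfl, ih1,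
      hw_succ (n + 1)]
    have h1 := choose2_succ (n + 1)
    have h2 := choose2_succ (n + 2)
    have h3 := choose2_pos n
    have b1 : (n + 1 + 1).choose 2 = (n + 2).choose 2 := rfl
    have b2 : (n + 2 + 1).choose 2 = (n + 1 + 2).choose 2 := rfl
    have e1 : (n + 1 + 2).choose 2 - 1 = ((n + 2).choose 2 - 1) + (n + 2) := by omega
    have e2 : (n + 2 + 2).choose 2 - 1 = ((n + 2).choose 2 - 1) + (2 * n + 5) := by omega
    rw [e1, e2, pow_add, pow_add]
    ring

theorem stmt_17 (D : ℕ → ℕ → ℤ) (hD0 : ∀ a : ℕ, D a 0 = 1) (h0D : ∀ b : ℕ, D 0 b = 1)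
    (hrec : ∀ a b : ℕ, D (a + 1) (b + 1) = D a (b + 1) + D a b + D (a + 1) b)
    (n : ℕ) (hn : 1 ≤ n) :
    Matrix.det (Matrix.of fun i j : Fin n => D (i + j + 1) (i + j + 1)) =
      2 ^ ((n + 2).choose 2 - 2) + 2 ^ ((n + 1).choose 2 - 1) := by
  have hD := D_closed D hD0 h0D hrec
  have hM : (Matrix.of fun i j : Fin n => D ((i : ℕ) + (j : ℕ) + 1) ((i : ℕ) + (j : ℕ) + 1))
      = Qmat n * (Tmat n * (Qmat n)ᵀ) := by
    ext i j
    rw [Matrix.of_apply, hD, ← Qf_eq_Pf, ← prod_entry n i j]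
  rw [hM, Matrix.det_mul, Matrix.det_mul, Matrix.det_transpose, det_Qmat, det_Tmat]
  obtain ⟨m, rfl⟩ : ∃ m, n = m + 1 := ⟨n - 1, by omega⟩
  rw [Hs_closed m]
  have h1 := choose2_succ (m + 1)
  have h2 := choose2_pos m
  have hx : (m + 1 + 1).choose 2 = (m + 2).choose 2 := by
    rw [show m + 1 + 1 = m + 2 from rfl]
  have eA : (m + 1 + 2).choose 2 - 2 = ((m + 2).choose 2 - 1) + (m + 1) := by omega
  have eB : (m + 1 + 1).choose 2 - 1 = (m + 2).choose 2 - 1 := by omega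
  rw [eA, eB, pow_add]
  ring
end
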